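/- arXiv:math/0408012 — 2 statements merged into one kernel-verified Lean document; each statement's English description precedes it below -/
import Mathlib

section
/- Let 0 < λ₁ < ⋯ < λ_n, let a = diag(λ₁,…,λ_n) ∈ S⁺(n;ℂ), and let f_a : G_{n,k} → ℝ be f_a(x) = ‖x − a‖². Then the set of critical points of f_a is exactly Σ_a = {σ_I : I = [i₁,…,i_k] ⊆ [1,…,n], |I| = k}, where σ_I = diag(ε₁,…,ε_n) with ε_j = −1 if j ∈ I and ε_j = 1 otherwise. -/
open scoped Matrix

attribute [local instance] Matrix.frobeniusNormedAddCommGroup Matrix.frobeniusNormedSpace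

/-- `x` is a critical point of the restriction of `f` to `M ⊆ E`: the derivative of `f`
along every smooth curve in `M` through `x` vanishes. -/
def IsCriticalPointOn {E : Type*} [NormedAddCommGroup E] [NormedSpace ℝ E]
    (M : Set E) (f : E → ℝ) (x : E) : Prop :=
  x ∈ M ∧ ∀ c : ℝ → E, ContDiff ℝ (⊤ : ℕ∞) c → (∀ t, c t ∈ M) → c 0 = x →
    deriv (f ∘ c) 0 = 0

/-- `G_{n,k}`: the Hermitian matrices `x` with `x² = I` having exactly `k` negative
eigenvalues (the Grassmannian of `k`-planes in `ℂⁿ` inside the space of Hermitian matrices). -/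
def GrassmannianSet (n k : ℕ) : Set (Matrix (Fin n) (Fin n) ℂ) :=
  {x | x.IsHermitian ∧ x * x = 1 ∧
    ∀ hx : x.IsHermitian, Fintype.card {i // hx.eigenvalues i < 0} = k}

/-- The diagonal matrix `σ_I` with entries `-1` at positions in `I` and `1` elsewhere. -/
def sigmaDiag {n : ℕ} (I : Finset (Fin n)) : Matrix (Fin n) (Fin n) ℂ :=
  Matrix.diagonal (fun j => if j ∈ I then (-1 : ℂ) else 1)

section AuxLemmas

open NormedSpace

attribute [local instance] Matrix.frobeniusNormedRing Matrix.frobeniusNormedAlgebra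

/-! ### Spectral lemmas -/

private lemma eig_pm {n : ℕ} {x : Matrix (Fin n) (Fin n) ℂ} (hx : x.IsHermitian)
    (hsq : x * x = 1) (i : Fin n) : hx.eigenvalues i = 1 ∨ hx.eigenvalues i = -1 := by
  set w : Fin n → ℂ := ⇑(hx.eigenvectorBasis i) with hw
  have hv := hx.mulVec_eigenvectorBasis i
  have hvne : w ≠ 0 := by
    have h0 := hx.eigenvectorBasis.orthonormal.ne_zero i
    intro h; exact h0 (by ext j; exact congrFun h j)
  obtain ⟨j, hj⟩ := Function.ne_iff.mp hvne
  have h2 : (x * x) *ᵥ w = hx.eigenvalues i • (hx.eigenvalues i • w) := by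
    rw [← Matrix.mulVec_mulVec, hv, Matrix.mulVec_smul, hv]
  rw [hsq, Matrix.one_mulVec] at h2
  have h3 := congrFun h2 j
  simp only [Pi.smul_apply, Complex.real_smul] at h3
  have h4 : ((hx.eigenvalues i : ℂ) * (hx.eigenvalues i) - 1) * w j = 0 := by
    linear_combination -h3
  rcases mul_eq_zero.1 h4 with h5 | h5
  · have h6 : (hx.eigenvalues i : ℂ) * (hx.eigenvalues i) = 1 := by linear_combination h5
    have h7 : hx.eigenvalues i * hx.eigenvalues i = 1 := by exact_mod_cast h6
    exact mul_self_eq_one_iff.1 h7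
  · exact absurd h5 hj

private lemma trace_eq_sum_eig {n : ℕ} {x : Matrix (Fin n) (Fin n) ℂ} (hx : x.IsHermitian) :
    x.trace = ∑ i, (hx.eigenvalues i : ℂ) := by
  conv_lhs => rw [hx.spectral_theorem, Unitary.conjStarAlgAut_apply]
  rw [Matrix.trace_mul_comm, ← mul_assoc]
  have hu : (star (hx.eigenvectorUnitary : Matrix (Fin n) (Fin n) ℂ)) *
      (hx.eigenvectorUnitary : Matrix (Fin n) (Fin n) ℂ) = 1 :=
    Matrix.UnitaryGroup.star_mul_self _
  rw [hu, one_mul, Matrix.trace_diagonal]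
  rfl

private lemma card_neg_iff {n k : ℕ} {x : Matrix (Fin n) (Fin n) ℂ} (hx : x.IsHermitian)
    (hsq : x * x = 1) :
    Fintype.card {i // hx.eigenvalues i < 0} = k ↔ x.trace = (n : ℂ) - 2 * k := by
  classical
  have hcard : Fintype.card {i // hx.eigenvalues i < 0}
      = (Finset.univ.filter fun i => hx.eigenvalues i < 0).card := Fintype.card_subtype _
  set S := Finset.univ.filter fun i : Fin n => hx.eigenvalues i < 0 with hS
  have hsum : (∑ i, hx.eigenvalues i) = (n : ℝ) - 2 * S.card := by
    have h1 : ∀ i : Fin n, hx.eigenvalues i = 1 - 2 * (if i ∈ S then (1:ℝ) else 0) := by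
      intro i
      rcases eig_pm hx hsq i with h | h
      · have hm : i ∉ S := by simp [hS, h]
        simp [hm, h]
      · have hm : i ∈ S := by simp [hS, h]
        simp [hm, h]; ring
    rw [Finset.sum_congr rfl fun i _ => h1 i, Finset.sum_sub_distrib]
    simp [Finset.sum_ite_mem, mul_comm]
  have hsc : x.trace = (((n : ℝ) - 2 * S.card : ℝ) : ℂ) := by
    rw [trace_eq_sum_eig hx, ← hsum, Complex.ofReal_sum]
  rw [hcard, hsc]
  constructor
  · rintro rfl; push_cast; ring
  · intro h
    have h2 : ((n : ℝ) - 2 * S.card) = ((n : ℝ) - 2 * k) := by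
      apply Complex.ofReal_injective
      rw [h]; push_cast; ring
    have : (S.card : ℝ) = (k : ℝ) := by linarith
    exact_mod_cast this

private lemma mem_G_iff {n k : ℕ} {x : Matrix (Fin n) (Fin n) ℂ} :
    x ∈ GrassmannianSet n k ↔
      x.IsHermitian ∧ x * x = 1 ∧ x.trace = (n : ℂ) - 2 * k := by
  constructor
  · rintro ⟨h1, h2, h3⟩
    exact ⟨h1, h2, (card_neg_iff h1 h2).1 (h3 h1)⟩
  · rintro ⟨h1, h2, h3⟩
    exact ⟨h1, h2, fun hx => (card_neg_iff hx h2).2 h3⟩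

private lemma trace_sigma {n : ℕ} (I : Finset (Fin n)) :
    (sigmaDiag I).trace = (n : ℂ) - 2 * I.card := by
  classical
  rw [sigmaDiag, Matrix.trace_diagonal]
  rw [Finset.sum_congr rfl (fun j _ => show (if j ∈ I then (-1:ℂ) else 1)
    = 1 - 2 * (if j ∈ I then 1 else 0) by split <;> ring), Finset.sum_sub_distrib]
  simp [Finset.sum_ite_mem, mul_comm]

private lemma sigma_mem {n k : ℕ} {I : Finset (Fin n)} (hI : I.card = k) :
    sigmaDiag I ∈ GrassmannianSet n k := by
  refine mem_G_iff.2 ⟨?_, ?_, ?_⟩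
  · show (sigmaDiag I)ᴴ = sigmaDiag I
    rw [sigmaDiag, Matrix.diagonal_conjTranspose]
    have hst : star (fun j => if j ∈ I then (-1:ℂ) else 1)
        = fun j => if j ∈ I then (-1:ℂ) else 1 := by
      funext j; simp only [Pi.star_apply]; split <;> simp
    rw [hst]
  · rw [sigmaDiag, Matrix.diagonal_mul_diagonal]
    have hsq : (fun i => (if i ∈ I then (-1:ℂ) else 1) * if i ∈ I then -1 else 1)
        = fun _ => (1:ℂ) := by
      funext i; split <;> norm_num
    rw [hsq, Matrix.diagonal_one]
  · rw [trace_sigma, hI]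

/-! ### Analytic lemmas -/

private lemma frob_sq {n : ℕ} (A : Matrix (Fin n) (Fin n) ℂ) :
    ‖A‖ ^ 2 = ∑ i, ∑ j, Complex.normSq (A i j) := by
  rw [Matrix.frobenius_norm_def, ← Real.rpow_natCast _ 2, ← Real.rpow_mul (by positivity)]
  norm_num
  exact Finset.sum_congr rfl fun i _ => Finset.sum_congr rfl fun j _ => Complex.sq_norm _

private lemma normSq_sum_eq {n : ℕ} {y : Matrix (Fin n) (Fin n) ℂ} (hy : y.IsHermitian)
    (hsq : y * y = 1) : ∑ i, ∑ j, Complex.normSq (y i j) = n := by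
  have h1 : Matrix.trace (y * y) = (n : ℂ) := by
    rw [hsq, Matrix.trace_one]; simp
  have h2 : Matrix.trace (y * y) = ((∑ i, ∑ j, Complex.normSq (y i j) : ℝ) : ℂ) := by
    simp only [Matrix.trace, Matrix.diag, Matrix.mul_apply]
    push_cast
    refine Finset.sum_congr rfl fun i _ => Finset.sum_congr rfl fun j _ => ?_
    have hji : y j i = (starRingEnd ℂ) (y i j) := by
      have := congrFun (congrFun hy.symm j) i
      simpa [Matrix.conjTranspose_apply] using this
    rw [hji, Complex.mul_conj]
  rw [h1] at h2
  exact_mod_cast h2.symm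

private lemma val_on_G {n : ℕ} (l : Fin n → ℝ) {y : Matrix (Fin n) (Fin n) ℂ}
    (hy : y.IsHermitian) (hsq : y * y = 1) :
    ‖y - Matrix.diagonal (fun i => (l i : ℂ))‖ ^ 2
      = ((n : ℝ) + ∑ i, (l i)^2) - 2 * ∑ i, l i * (y i i).re := by
  rw [frob_sq]
  have key : ∀ i : Fin n,
      ∑ j, Complex.normSq ((y - Matrix.diagonal fun i => (l i : ℂ)) i j)
      = (∑ j, Complex.normSq (y i j)) + ((l i)^2 - 2 * (l i) * (y i i).re) := by
    intro i
    rw [← Finset.add_sum_erase _ _ (Finset.mem_univ i),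
        ← Finset.add_sum_erase _ (fun j => Complex.normSq (y i j)) (Finset.mem_univ i)]
    have hoff : ∀ j ∈ Finset.univ.erase i,
        Complex.normSq ((y - Matrix.diagonal fun i => (l i : ℂ)) i j)
          = Complex.normSq (y i j) := by
      intro j hj
      have hne : i ≠ j := Ne.symm (Finset.mem_erase.1 hj).1
      simp [Matrix.sub_apply, Matrix.diagonal_apply_ne _ hne]
    rw [Finset.sum_congr rfl hoff]
    have hdiag : Complex.normSq ((y - Matrix.diagonal fun i => (l i : ℂ)) i i)
        = Complex.normSq (y i i) + ((l i)^2 - 2 * (l i) * (y i i).re) := by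
      simp only [Matrix.sub_apply, Matrix.diagonal_apply_eq, Complex.normSq_apply,
        Complex.sub_re, Complex.sub_im, Complex.ofReal_re, Complex.ofReal_im]
      ring
    rw [hdiag]; ring
  rw [Finset.sum_congr rfl (fun i _ => key i), Finset.sum_add_distrib, normSq_sum_eq hy hsq,
    Finset.sum_sub_distrib]
  rw [Finset.mul_sum]
  ring_nf

private noncomputable def entryCLM {n : ℕ} (i j : Fin n) :
    Matrix (Fin n) (Fin n) ℂ →L[ℝ] ℂ :=
  LinearMap.toContinuousLinearMap
    { toFun := fun A => A i j
      map_add' := fun _ _ => rfl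
      map_smul' := fun _ _ => rfl }

private lemma hasDerivAt_entry {n : ℕ} {c : ℝ → Matrix (Fin n) (Fin n) ℂ}
    {v : Matrix (Fin n) (Fin n) ℂ} {t : ℝ} (h : HasDerivAt c v t) (i j : Fin n) :
    HasDerivAt (fun s => c s i j) (v i j) t :=
  (entryCLM i j).hasFDerivAt.comp_hasDerivAt t h

private lemma deriv_fa {n : ℕ} (l : Fin n → ℝ) {c : ℝ → Matrix (Fin n) (Fin n) ℂ}
    (hc : ContDiff ℝ (⊤ : ℕ∞) c)
    (hmem : ∀ t, (c t).IsHermitian ∧ c t * c t = 1) :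
    deriv ((fun y => ‖y - Matrix.diagonal (fun i => (l i : ℂ))‖ ^ 2) ∘ c) 0
      = -2 * ∑ i, l i * ((deriv c 0) i i).re := by
  have hδ : HasDerivAt c (deriv c 0) 0 := ((hc.differentiable (by simp)) 0).hasDerivAt
  have hre : ∀ i : Fin n, HasDerivAt (fun t => (c t i i).re) (((deriv c 0) i i).re) 0 :=
    fun i => Complex.reCLM.hasFDerivAt.comp_hasDerivAt _ (hasDerivAt_entry hδ i i)
  have hfun : ((fun y => ‖y - Matrix.diagonal (fun i => (l i : ℂ))‖ ^ 2) ∘ c)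
      = fun t => ((n : ℝ) + ∑ i, (l i)^2) - 2 * ∑ i, l i * (c t i i).re :=
    funext fun t => val_on_G l (hmem t).1 (hmem t).2
  rw [hfun]
  have hS : HasDerivAt (fun t => ∑ i, l i * (c t i i).re)
      (∑ i, l i * ((deriv c 0) i i).re) 0 :=
    HasDerivAt.fun_sum (fun i _ => (hre i).const_mul (l i))
  have hT : HasDerivAt (fun t => ((n : ℝ) + ∑ i, (l i)^2) - 2 * ∑ i, l i * (c t i i).re)
      (0 - 2 * ∑ i, l i * ((deriv c 0) i i).re) 0 :=
    (hasDerivAt_const _ _).sub (hS.const_mul 2)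
  rw [hT.deriv]; ring

private lemma tangent_anticomm {n : ℕ} {c : ℝ → Matrix (Fin n) (Fin n) ℂ}
    (hc : ContDiff ℝ (⊤ : ℕ∞) c) (hmem : ∀ t, c t * c t = 1) :
    deriv c 0 * c 0 + c 0 * deriv c 0 = 0 := by
  have hδ : HasDerivAt c (deriv c 0) 0 := ((hc.differentiable (by simp)) 0).hasDerivAt
  have h1 : HasDerivAt (fun t => c t * c t) (deriv c 0 * c 0 + c 0 * deriv c 0) 0 := hδ.mul hδ
  have h2 : (fun t => c t * c t) = fun _ => (1 : Matrix (Fin n) (Fin n) ℂ) := funext hmem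
  rw [h2] at h1
  exact h1.unique (hasDerivAt_const _ _)

private lemma curve_facts {n : ℕ} {x A : Matrix (Fin n) (Fin n) ℂ} (hx : x.IsHermitian)
    (hxx : x * x = 1) (hA : Aᴴ = -A) :
    ∃ c : ℝ → Matrix (Fin n) (Fin n) ℂ, ContDiff ℝ (⊤ : ℕ∞) c ∧
      (∀ t, (c t).IsHermitian ∧ c t * c t = 1 ∧ (c t).trace = x.trace) ∧
      c 0 = x ∧ deriv c 0 = A * x - x * A := by
  set e : ℝ → Matrix (Fin n) (Fin n) ℂ := fun t => exp (t • A) with he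
  set f : ℝ → Matrix (Fin n) (Fin n) ℂ := fun t => exp (t • (-A)) with hf
  have hcomm : ∀ t : ℝ, Commute (t • A) (t • (-A)) :=
    fun t => ((Commute.refl A).neg_right.smul_left t).smul_right t
  have hef : ∀ t, e t * f t = 1 := by
    intro t
    rw [he, hf]
    show exp (t • A) * exp (t • (-A)) = 1
    erw [← exp_add_of_commute (hcomm t)]
    simp
  have hfe : ∀ t, f t * e t = 1 := by
    intro t
    rw [he, hf]
    show exp (t • (-A)) * exp (t • A) = 1
    erw [← exp_add_of_commute (hcomm t).symm]
    simp
  have hstar_e : ∀ t, star (e t) = f t := by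
    intro t
    show star (exp (t • A)) = exp (t • (-A))
    rw [star_exp]
    congr 1
    rw [star_smul, star_trivial, Matrix.star_eq_conjTranspose, hA]
  have hstar_f : ∀ t, star (f t) = e t := by
    intro t
    show star (exp (t • (-A))) = exp (t • A)
    rw [star_exp]
    congr 1
    rw [star_smul, star_trivial, Matrix.star_eq_conjTranspose, Matrix.conjTranspose_neg, hA,
      neg_neg]
  refine ⟨fun t => e t * x * f t, ?_, ?_, ?_, ?_⟩
  · have hexp : ContDiff ℝ (⊤ : ℕ∞) (exp : Matrix (Fin n) (Fin n) ℂ → _) :=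
      contDiff_iff_contDiffAt.2 fun y => (NormedSpace.exp_analytic (𝕂 := ℝ) y).contDiffAt
    have h1 : ContDiff ℝ (⊤ : ℕ∞) e := hexp.comp (contDiff_id.smul contDiff_const)
    have h2 : ContDiff ℝ (⊤ : ℕ∞) f := hexp.comp (contDiff_id.smul contDiff_const)
    exact (h1.mul contDiff_const).mul h2
  · intro t
    refine ⟨?_, ?_, ?_⟩
    · show (e t * x * f t)ᴴ = e t * x * f t
      rw [← Matrix.star_eq_conjTranspose, star_mul, star_mul, hstar_f t, hstar_e t,
        Matrix.star_eq_conjTranspose, hx.eq, ← mul_assoc]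
    · show e t * x * f t * (e t * x * f t) = 1
      have h1 : e t * x * f t * (e t * x * f t) = e t * (x * (f t * e t * x)) * f t := by
        simp only [mul_assoc]
      rw [h1, hfe, one_mul, mul_assoc (e t), hxx, one_mul, hef]
    · show (e t * x * f t).trace = x.trace
      rw [Matrix.trace_mul_comm, ← mul_assoc, hfe, one_mul]
  · show e 0 * x * f 0 = x
    have h0 : e 0 = 1 := by rw [he]; show exp (((0:ℝ)) • A) = 1; simp
    have h1 : f 0 = 1 := by rw [hf]; show exp (((0:ℝ)) • (-A)) = 1; simp
    rw [h0, h1, one_mul, mul_one]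
  · have hdE : HasDerivAt e A 0 := by
      rw [he]; have h := hasDerivAt_exp_smul_const A (0 : ℝ); simp at h; exact h
    have hdF : HasDerivAt f (-A) 0 := by
      rw [hf]; have h := hasDerivAt_exp_smul_const (-A) (0 : ℝ); simp at h ⊢; exact h
    have hE0 : e 0 = 1 := by rw [he]; show exp (((0:ℝ)) • A) = 1; simp
    have hF0 : f 0 = 1 := by rw [hf]; show exp (((0:ℝ)) • (-A)) = 1; simp
    have hder := (hdE.fun_mul (hasDerivAt_const (0:ℝ) x)).fun_mul hdF
    rw [hE0, hF0] at hder
    simp only [mul_zero, add_zero, mul_one, one_mul, mul_neg] at hder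
    rw [sub_eq_add_neg]; exact hder.deriv

end AuxLemmas

/-- For `0 < λ₁ < ⋯ < λ_n` and `a = diag(λ₁,…,λ_n)`, the set of critical
points of `f_a(x) = ‖x - a‖²` on `G_{n,k}` (Frobenius norm, coming from
`⟨u,v⟩ = Re Tr(u* v)`) is exactly `{σ_I : I ⊆ [1,…,n], |I| = k}`. -/
theorem grassmannian_distSq_criticalSet (n k : ℕ) (l : Fin n → ℝ)
    (hpos : ∀ i, 0 < l i) (hmono : StrictMono l) :
    {x | IsCriticalPointOn (GrassmannianSet n k)
        (fun y => ‖y - Matrix.diagonal (fun i => (l i : ℂ))‖ ^ 2) x} =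
      {x | ∃ I : Finset (Fin n), I.card = k ∧ x = sigmaDiag I} := by
  classical
  ext x
  simp only [Set.mem_setOf_eq]
  constructor
  · rintro ⟨hmem, hcrit⟩
    obtain ⟨hher, hsq, htr⟩ := mem_G_iff.1 hmem
    have hconj : ∀ i j, x j i = (starRingEnd ℂ) (x i j) := by
      intro i j
      have := congrFun (congrFun hher.symm j) i
      simpa [Matrix.conjTranspose_apply] using this
    have haH : (Matrix.diagonal (fun i => (l i : ℂ)))ᴴ = Matrix.diagonal (fun i => (l i : ℂ)) := by
      rw [Matrix.diagonal_conjTranspose]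
      have hst : star (fun i => ((l i : ℝ) : ℂ)) = fun i => ((l i : ℝ) : ℂ) := by
        funext i; simp [Pi.star_apply, Complex.star_def, Complex.conj_ofReal]
      rw [hst]
    set A : Matrix (Fin n) (Fin n) ℂ :=
      x * Matrix.diagonal (fun i => (l i : ℂ)) - Matrix.diagonal (fun i => (l i : ℂ)) * x with hA
    have hAskew : Aᴴ = -A := by
      rw [hA, Matrix.conjTranspose_sub, Matrix.conjTranspose_mul, Matrix.conjTranspose_mul,
        haH, hher.eq, neg_sub]
    obtain ⟨c, hcsm, hcmem, hc0, hcder⟩ := curve_facts hher hsq hAskew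
    have hmem' : ∀ t, c t ∈ GrassmannianSet n k := fun t =>
      mem_G_iff.2 ⟨(hcmem t).1, (hcmem t).2.1, by rw [(hcmem t).2.2, htr]⟩
    have h0 := hcrit c hcsm hmem' hc0
    rw [deriv_fa l hcsm (fun t => ⟨(hcmem t).1, (hcmem t).2.1⟩), hcder] at h0
    -- entries of the commutator
    have hAij : ∀ i j, A i j = ((l j : ℂ) - l i) * x i j := by
      intro i j
      rw [hA, Matrix.sub_apply, Matrix.mul_diagonal, Matrix.diagonal_mul]
      ring
    have hvii : ∀ i, (A * x - x * A) i i
        = ((∑ j, 2 * (l j - l i) * Complex.normSq (x i j) : ℝ) : ℂ) := by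
      intro i
      rw [Matrix.sub_apply, Matrix.mul_apply, Matrix.mul_apply, ← Finset.sum_sub_distrib]
      push_cast
      refine Finset.sum_congr rfl fun j _ => ?_
      rw [hAij i j, hAij j i, hconj i j]
      have hm : x i j * (starRingEnd ℂ) (x i j) = (Complex.normSq (x i j) : ℂ) :=
        Complex.mul_conj _
      linear_combination (2 * (l j : ℂ) - 2 * (l i : ℂ)) * hm
    have h1 : ∑ i, l i * ((A * x - x * A) i i).re
        = ∑ i, ∑ j, 2 * l i * (l j - l i) * Complex.normSq (x i j) := by
      refine Finset.sum_congr rfl fun i _ => ?_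
      rw [hvii i, Complex.ofReal_re, Finset.mul_sum]
      exact Finset.sum_congr rfl fun j _ => by ring
    have hsymm : ∀ i j, Complex.normSq (x j i) = Complex.normSq (x i j) := by
      intro i j; rw [hconj i j, Complex.normSq_conj]
    have hT : ∑ i, ∑ j, 2 * l i * (l j - l i) * Complex.normSq (x i j) = 0 := by
      rw [← h1]; linarith [h0]
    have hTsw : ∑ i, ∑ j, 2 * l j * (l i - l j) * Complex.normSq (x i j) = 0 := by
      rw [← hT, Finset.sum_comm]
      refine Finset.sum_congr rfl fun j _ => Finset.sum_congr rfl fun i _ => ?_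
      rw [hsymm i j]
    have hzero : (∑ i, ∑ j, 2 * (l i - l j)^2 * Complex.normSq (x i j))
        + ((∑ i, ∑ j, 2 * l i * (l j - l i) * Complex.normSq (x i j))
          + (∑ i, ∑ j, 2 * l j * (l i - l j) * Complex.normSq (x i j))) = 0 := by
      rw [← Finset.sum_add_distrib, ← Finset.sum_add_distrib]
      refine Finset.sum_eq_zero fun i _ => ?_
      rw [← Finset.sum_add_distrib, ← Finset.sum_add_distrib]
      exact Finset.sum_eq_zero fun j _ => by ring
    have hP2 : ∑ i, ∑ j, 2 * (l i - l j)^2 * Complex.normSq (x i j)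
        = 2 * ∑ i, ∑ j, (l i - l j)^2 * Complex.normSq (x i j) := by
      rw [Finset.mul_sum]
      refine Finset.sum_congr rfl fun i _ => ?_
      rw [Finset.mul_sum]
      exact Finset.sum_congr rfl fun j _ => by ring
    have hPzero : ∑ i, ∑ j, (l i - l j)^2 * Complex.normSq (x i j) = 0 := by
      rw [hP2, hT, hTsw] at hzero; linarith
    have hoff : ∀ i j, i ≠ j → x i j = 0 := by
      intro i j hij
      have hin := (Finset.sum_eq_zero_iff_of_nonneg (fun i _ => Finset.sum_nonneg fun j _ =>
        mul_nonneg (sq_nonneg _) (Complex.normSq_nonneg _))).1 hPzero i (Finset.mem_univ i)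
      have h3 := (Finset.sum_eq_zero_iff_of_nonneg (fun j _ =>
        mul_nonneg (sq_nonneg _) (Complex.normSq_nonneg _))).1 hin j (Finset.mem_univ j)
      have h4 : (l i - l j) ≠ 0 := sub_ne_zero.2 fun h => hij (hmono.injective h)
      rcases mul_eq_zero.1 h3 with h5 | h5
      · exact absurd (pow_eq_zero_iff (by norm_num) |>.1 h5) h4
      · exact Complex.normSq_eq_zero.1 h5
    have hdval : ∀ i, x i i = 1 ∨ x i i = -1 := by
      intro i
      have h5 : (x * x) i i = 1 := by rw [hsq]; exact Matrix.one_apply_eq i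
      rw [Matrix.mul_apply, Finset.sum_eq_single i
        (fun j _ hji => by rw [hoff i j (Ne.symm hji), zero_mul])
        (fun h => absurd (Finset.mem_univ i) h)] at h5
      exact mul_self_eq_one_iff.1 h5
    set I : Finset (Fin n) := Finset.univ.filter (fun i => x i i = -1) with hI
    have hxd : x = sigmaDiag I := by
      ext i j
      by_cases hij : i = j
      · subst hij
        by_cases hmem2 : i ∈ I
        · simp only [sigmaDiag, Matrix.diagonal_apply_eq, hmem2, if_true]
          exact (Finset.mem_filter.1 hmem2).2
        · simp only [sigmaDiag, Matrix.diagonal_apply_eq, hmem2, if_false]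
          rcases hdval i with h | h
          · exact h
          · exact absurd (Finset.mem_filter.2 ⟨Finset.mem_univ i, h⟩) hmem2
      · rw [hoff i j hij, sigmaDiag, Matrix.diagonal_apply_ne _ hij]
    refine ⟨I, ?_, hxd⟩
    have htr2 : x.trace = (n : ℂ) - 2 * I.card := by rw [hxd]; exact trace_sigma I
    have heq : (n : ℂ) - 2 * k = (n : ℂ) - 2 * I.card := htr.symm.trans htr2
    have hcast : (I.card : ℂ) = (k : ℂ) := by linear_combination heq / 2
    exact_mod_cast hcast
  · rintro ⟨I, hIc, rfl⟩
    refine ⟨sigma_mem hIc, ?_⟩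
    intro c hc hcm hc0
    have hmem2 : ∀ t, (c t).IsHermitian ∧ c t * c t = 1 := fun t => ⟨(hcm t).1, (hcm t).2.1⟩
    rw [deriv_fa l hc hmem2]
    have htan := tangent_anticomm hc (fun t => (hcm t).2.1)
    rw [hc0] at htan
    have hdiag0 : ∀ i, (deriv c 0) i i = 0 := by
      intro i
      have h := Matrix.ext_iff.mpr htan i i
      simp only [sigmaDiag] at h
      rw [Matrix.add_apply, Matrix.zero_apply, Matrix.mul_diagonal, Matrix.diagonal_mul] at h
      have hd : (if i ∈ I then (-1:ℂ) else 1) ≠ 0 := by split <;> norm_num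
      have h2 : (2 * (if i ∈ I then (-1:ℂ) else 1)) * (deriv c 0) i i = 0 := by
        linear_combination h
      rcases mul_eq_zero.1 h2 with h3 | h3
      · rcases mul_eq_zero.1 h3 with h4 | h4
        · norm_num at h4
        · exact absurd h4 hd
      · exact h3
    simp [hdiag0]
end

section
/- Let S(n;ℂ) = {x ∈ M(n;ℂ) : xᵀ = x} be the real vector space of n×n complex symmetric matrices with inner product ⟨u,v⟩ = Re Tr(u*v), and let LG_n = {x ∈ S(n;ℂ) : x̄x = I_n}, the Grassmannian of Lagrangian subspaces of ℂⁿ, regarded as a smooth submanifold of S(n;ℂ). Let 0 < λ₁ < ⋯ < λ_n, a = diag(λ₁,…,λ_n), and f_a : LG_n → ℝ, f_a(x) = ‖x − a‖². Then f_a is a Morse function on LG_n; its critical points are exactly the matrices σ_I = diag(ε₁,…,ε_n) with ε_j = −1 for j ∈ I and ε_j = 1 otherwise, for I = [i₁ < ⋯ < i_r] ⊆ [1,…,n] (including I = ∅); and the index of σ_{i₁,…,i_r} is i₁ + ⋯ + i_r. -/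
open scoped Matrix

attribute [local instance] Matrix.frobeniusNormedAddCommGroup Matrix.frobeniusNormedSpace

/-- The set of tangent vectors to a subset `M ⊆ E` at a point `x`. -/
def TangentSetAt {E : Type*} [NormedAddCommGroup E] [NormedSpace ℝ E]
    (M : Set E) (x : E) : Set E :=
  {u | ∃ c : ℝ → E, ContDiff ℝ (⊤ : ℕ∞) c ∧ (∀ t, c t ∈ M) ∧ c 0 = x ∧ deriv c 0 = u}

/-- `B` is the Hessian bilinear form of `f|M` at `x`. -/
def IsHessianAt {E : Type*} [NormedAddCommGroup E] [NormedSpace ℝ E]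
    (M : Set E) (f : E → ℝ) (x : E) (B : E →ₗ[ℝ] E →ₗ[ℝ] ℝ) : Prop :=
  ∀ c : ℝ → E, ContDiff ℝ (⊤ : ℕ∞) c → (∀ t, c t ∈ M) → c 0 = x →
    deriv (deriv (f ∘ c)) 0 = B (deriv c 0) (deriv c 0)

/-- Non-degeneracy of a critical point of `f|M`. -/
def IsNondegenerateCriticalPointOn {E : Type*} [NormedAddCommGroup E] [NormedSpace ℝ E]
    (M : Set E) (f : E → ℝ) (x : E) : Prop :=
  IsCriticalPointOn M f x ∧ ∃ B : E →ₗ[ℝ] E →ₗ[ℝ] ℝ, IsHessianAt M f x B ∧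
    ∀ u ∈ TangentSetAt M x, (∀ w ∈ TangentSetAt M x, B u w = 0) → u = 0

/-- `f` is a Morse function on `M`. -/
def IsMorseOn {E : Type*} [NormedAddCommGroup E] [NormedSpace ℝ E]
    (M : Set E) (f : E → ℝ) : Prop :=
  ∀ x, IsCriticalPointOn M f x → IsNondegenerateCriticalPointOn M f x

/-- The critical point `x` of `f|M` has index `r`. -/
def HasIndexAt {E : Type*} [NormedAddCommGroup E] [NormedSpace ℝ E]
    (M : Set E) (f : E → ℝ) (x : E) (r : ℕ) : Prop :=
  ∃ B : E →ₗ[ℝ] E →ₗ[ℝ] ℝ, IsHessianAt M f x B ∧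
    (∃ V : Submodule ℝ E, (V : Set E) ⊆ TangentSetAt M x ∧ Module.finrank ℝ V = r ∧
      ∀ u ∈ V, u ≠ 0 → B u u < 0) ∧
    (∀ W : Submodule ℝ E, (W : Set E) ⊆ TangentSetAt M x → (∀ u ∈ W, u ≠ 0 → B u u < 0) →
      Module.finrank ℝ W ≤ r)

/-- `LG_n = {x ∈ S(n;ℂ) : x̄ x = I}`: the Grassmannian of Lagrangian subspaces of `ℂⁿ`,
inside the space `S(n;ℂ)` of complex symmetric matrices. -/
def LagrangianGrassmannianSet (n : ℕ) : Set (Matrix (Fin n) (Fin n) ℂ) :=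
  {x | x.IsSymm ∧ x.map (starRingEnd ℂ) * x = 1}


namespace LG16

open Matrix NormedSpace
open scoped ContDiff

variable {n : ℕ}

/-- entrywise conjugation as an `ℝ`-linear map -/
noncomputable def conjL (n : ℕ) :
    Matrix (Fin n) (Fin n) ℂ →ₗ[ℝ] Matrix (Fin n) (Fin n) ℂ where
  toFun v := v.map (starRingEnd ℂ)
  map_add' u v := by ext i j; simp [Matrix.map_apply]
  map_smul' r v := by
    ext i j
    simp [Matrix.map_apply, Complex.real_smul]

lemma conjL_apply (v : Matrix (Fin n) (Fin n) ℂ) :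
    conjL n v = v.map (starRingEnd ℂ) := rfl

lemma mem_LG_iff {x : Matrix (Fin n) (Fin n) ℂ} :
    x ∈ LagrangianGrassmannianSet n ↔ x.IsSymm ∧ x.map (starRingEnd ℂ) * x = 1 :=
  Iff.rfl

lemma LG_transpose {x : Matrix (Fin n) (Fin n) ℂ} (hx : x ∈ LagrangianGrassmannianSet n) :
    xᵀ = x := hx.1

lemma LG_left {x : Matrix (Fin n) (Fin n) ℂ} (hx : x ∈ LagrangianGrassmannianSet n) :
    x.map (starRingEnd ℂ) * x = 1 := hx.2

lemma LG_right {x : Matrix (Fin n) (Fin n) ℂ} (hx : x ∈ LagrangianGrassmannianSet n) :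
    x * x.map (starRingEnd ℂ) = 1 := mul_eq_one_comm.mp hx.2

/-- The exponential curve `t ↦ x * exp (t • u)` stays in `LG` and realizes
the tangent vector `x * u`. -/
theorem expCurve (x u : Matrix (Fin n) (Fin n) ℂ)
    (hx : x ∈ LagrangianGrassmannianSet n)
    (hT : uᵀ = x * u * x.map (starRingEnd ℂ))
    (hC : u.map (starRingEnd ℂ) = -(x * u * x.map (starRingEnd ℂ))) :
    ∃ c : ℝ → Matrix (Fin n) (Fin n) ℂ, ContDiff ℝ (⊤ : ℕ∞) c ∧
      (∀ t, c t ∈ LagrangianGrassmannianSet n) ∧ c 0 = x ∧ deriv c 0 = x * u := by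
  letI := Matrix.frobeniusNormedRing (α := ℂ) (m := Fin n)
  letI := Matrix.frobeniusNormedAlgebra (α := ℂ) (m := Fin n) (R := ℝ)
  letI : NormedAlgebra ℚ (Matrix (Fin n) (Fin n) ℂ) := NormedAlgebra.restrictScalars ℚ ℝ _
  set y := x.map (starRingEnd ℂ) with hy
  have hxs : xᵀ = x := hx.1
  have h1 : y * x = 1 := hx.2
  have h2 : x * y = 1 := mul_eq_one_comm.mp h1
  set U : (Matrix (Fin n) (Fin n) ℂ)ˣ := ⟨x, y, h2, h1⟩ with hU
  set g : ℝ → Matrix (Fin n) (Fin n) ℂ := fun t => exp (t • u) with hg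
  -- smoothness
  have hsmul : ∀ t : ℝ, t • u = ((1 : ℝ →L[ℝ] ℝ).smulRight u) t := by
    intro t; simp
  have hgan : ∀ t : ℝ, AnalyticAt ℝ g t := by
    intro t
    have h1' : AnalyticAt ℝ (fun A => exp A) (t • u) := exp_analytic (𝕂 := ℝ) _
    have h2' : AnalyticAt ℝ (fun s : ℝ => s • u) t := by
      rw [funext hsmul]
      exact ((1 : ℝ →L[ℝ] ℝ).smulRight u).analyticAt t
    exact h1'.comp (f := fun s : ℝ => s • u) (x := t) h2'
  have hcan : ∀ t : ℝ, AnalyticAt ℝ (fun t => x * g t) t := by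
    intro t
    exact ((ContinuousLinearMap.mul ℝ (Matrix (Fin n) (Fin n) ℂ) x).analyticAt _).comp
      (f := g) (x := t) (hgan t)
  have hcd : ContDiff ℝ (⊤ : ℕ∞) (fun t => x * g t) :=
    AnalyticOnNhd.contDiff (fun t _ => hcan t)
  -- conjugation identities
  have hmapc : Continuous fun A : Matrix (Fin n) (Fin n) ℂ => A.map (starRingEnd ℂ) :=
    (conjL n).continuous_of_finiteDimensional
  have hginv : ∀ t : ℝ, g t * g (-t) = 1 := by
    intro t
    have hco : Commute (t • u) ((-t) • u) := by
      apply Commute.smul_left; apply Commute.smul_right; exact Commute.refl u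
    calc g t * g (-t) = exp (t • u + (-t) • u) := (NormedSpace.exp_add_of_commute hco).symm
      _ = exp (0 : Matrix (Fin n) (Fin n) ℂ) := by rw [← add_smul]; norm_num
      _ = 1 := exp_zero
  have hgT : ∀ t : ℝ, (g t)ᵀ = x * g t * y := by
    intro t
    have h3 : (t • u)ᵀ = x * (t • u) * y := by
      rw [Matrix.transpose_smul, hT, Matrix.mul_smul, Matrix.smul_mul]
    calc (g t)ᵀ = exp ((t • u)ᵀ) := (Matrix.exp_transpose _).symm
      _ = exp (x * (t • u) * y) := by rw [h3]
      _ = x * exp (t • u) * y := Matrix.exp_units_conj U _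
      _ = x * g t * y := rfl
  have hmapsmul : ∀ (t : ℝ) (A : Matrix (Fin n) (Fin n) ℂ),
      (t • A).map (starRingEnd ℂ) = t • A.map (starRingEnd ℂ) := by
    intro t A
    ext i j
    simp [Matrix.map_apply, Complex.real_smul]
  have hgC : ∀ t : ℝ, (g t).map (starRingEnd ℂ) = x * g (-t) * y := by
    intro t
    have hmexp : (exp (t • u)).map (starRingEnd ℂ) =
        exp ((t • u).map (starRingEnd ℂ)) :=
      map_exp ((starRingEnd ℂ).mapMatrix) hmapc (t • u)
    have h4 : (t • u).map (starRingEnd ℂ) = x * ((-t) • u) * y := by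
      rw [hmapsmul, hC, Matrix.mul_smul, Matrix.smul_mul, smul_neg, neg_smul]
    calc (g t).map (starRingEnd ℂ) = exp ((t • u).map (starRingEnd ℂ)) := hmexp
      _ = exp (x * ((-t) • u) * y) := by rw [h4]
      _ = x * exp ((-t) • u) * y := Matrix.exp_units_conj U _
      _ = x * g (-t) * y := rfl
  refine ⟨fun t => x * g t, hcd, ?_, ?_, ?_⟩
  · intro t
    constructor
    · show (x * g t)ᵀ = x * g t
      rw [Matrix.transpose_mul, hgT t, hxs, Matrix.mul_assoc, h1, Matrix.mul_one]
    · show (x * g t).map (starRingEnd ℂ) * (x * g t) = 1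
      rw [Matrix.map_mul]
      rw [hgC t]
      show y * (x * g (-t) * y) * (x * g t) = 1
      calc y * (x * g (-t) * y) * (x * g t)
          = (y * x) * g (-t) * ((y * x) * g t) := by
            simp only [Matrix.mul_assoc]
        _ = g (-t) * g t := by rw [h1, Matrix.one_mul, Matrix.one_mul]
        _ = 1 := by simpa using hginv (-t)
  · show x * g 0 = x
    simp [hg, exp_zero]
  · have hd : HasDerivAt g u 0 := by
      have := hasDerivAt_exp_smul_const (𝕂 := ℝ) u (0 : ℝ)
      simp only [exp_zero, zero_smul, one_mul] at this
      exact this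
    have hd2 : HasDerivAt (fun t => x * g t) (x * u) 0 := hd.const_mul x
    exact hd2.deriv


/-- transpose as an `ℝ`-linear map -/
def transL (n : ℕ) :
    Matrix (Fin n) (Fin n) ℂ →ₗ[ℝ] Matrix (Fin n) (Fin n) ℂ where
  toFun v := vᵀ
  map_add' u v := by ext i j; simp
  map_smul' r v := by ext i j; simp

/-- the linear functional `v ↦ ∑ j, l j * Re (v j j)` -/
noncomputable def phiL (n : ℕ) (l : Fin n → ℝ) :
    Matrix (Fin n) (Fin n) ℂ →ₗ[ℝ] ℝ where
  toFun v := ∑ j, l j * (v j j).re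
  map_add' u v := by
    simp [Complex.add_re, mul_add, Finset.sum_add_distrib]
  map_smul' r v := by
    simp only [Matrix.smul_apply, Complex.real_smul, Complex.mul_re, Complex.ofReal_re,
      Complex.ofReal_im, RingHom.id_apply, smul_eq_mul, Finset.mul_sum]
    exact Finset.sum_congr rfl fun j _ => by ring

lemma phiL_apply (l : Fin n → ℝ) (v : Matrix (Fin n) (Fin n) ℂ) :
    phiL n l v = ∑ j, l j * (v j j).re := rfl

lemma sq_frobenius_norm (A : Matrix (Fin n) (Fin n) ℂ) :
    ‖A‖ ^ 2 = ∑ j, ∑ k, Complex.normSq (A j k) := by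
  have h0 : (0:ℝ) ≤ ∑ j, ∑ k, ‖A j k‖ ^ 2 := by positivity
  rw [Matrix.frobenius_norm_def,
    ← Real.rpow_natCast ((∑ i, ∑ j, ‖A i j‖ ^ 2) ^ ((1:ℝ)/2 : ℝ)) 2,
    ← Real.rpow_mul (by positivity)]
  norm_num
  simp [Complex.sq_norm]

lemma sum_normSq_of_LG {x : Matrix (Fin n) (Fin n) ℂ}
    (hx : x ∈ LagrangianGrassmannianSet n) :
    ∑ j, ∑ k, Complex.normSq (x j k) = n := by
  have h1 : ∀ j : Fin n, ∑ k, (Complex.normSq (x j k) : ℂ) = 1 := by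
    intro j
    have := congrFun (congrFun hx.2 j) j
    rw [Matrix.mul_apply, Matrix.one_apply_eq] at this
    rw [← this]
    refine Finset.sum_congr rfl fun k _ => ?_
    have hsymm : x k j = x j k := by
      conv_lhs => rw [← hx.1]
      rfl
    rw [Matrix.map_apply, hsymm, Complex.normSq_eq_conj_mul_self]
  have h2 : ∀ j : Fin n, ∑ k, Complex.normSq (x j k) = 1 := by
    intro j
    have := h1 j
    have h3 : ((∑ k, Complex.normSq (x j k) : ℝ) : ℂ) = ((1:ℝ) : ℂ) := by
      push_cast
      simpa using this
    exact_mod_cast h3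
  simp [h2]

lemma f_on_LG (l : Fin n → ℝ) {y : Matrix (Fin n) (Fin n) ℂ}
    (hy : y ∈ LagrangianGrassmannianSet n) :
    ‖y - Matrix.diagonal (fun i => (l i : ℂ))‖ ^ 2 =
      ((n : ℝ) + ∑ j, l j ^ 2) - 2 * phiL n l y := by
  rw [sq_frobenius_norm]
  have hexp : ∀ j k : Fin n, Complex.normSq ((y - Matrix.diagonal (fun i => (l i : ℂ))) j k) =
      Complex.normSq (y j k) + Complex.normSq (Matrix.diagonal (fun i => (l i : ℂ)) j k)
        - 2 * (y j k * (starRingEnd ℂ) (Matrix.diagonal (fun i => (l i : ℂ)) j k)).re := by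
    intro j k
    exact Complex.normSq_sub _ _
  simp only [Matrix.sub_apply] at hexp ⊢
  simp only [hexp, Finset.sum_sub_distrib, Finset.sum_add_distrib]
  rw [sum_normSq_of_LG hy]
  congr 1
  · congr 1
    refine Finset.sum_congr rfl fun j _ => ?_
    rw [Finset.sum_eq_single j]
    · simp [Complex.normSq_ofReal, sq]
    · intro k _ hk
      simp [Matrix.diagonal_apply_ne' _ hk]
    · simp
  · rw [phiL_apply, Finset.mul_sum]
    refine Finset.sum_congr rfl fun j _ => ?_
    rw [Finset.sum_eq_single j]
    · simp [Complex.mul_re]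
      ring
    · intro k _ hk
      simp [Matrix.diagonal_apply_ne' _ hk]
    · simp

section Curves

variable {c : ℝ → Matrix (Fin n) (Fin n) ℂ}

lemma curve_differentiable (hc : ContDiff ℝ (⊤ : ℕ∞) c) : Differentiable ℝ c :=
  hc.differentiable (by simp)

lemma curve_deriv_contDiff (hc : ContDiff ℝ (⊤ : ℕ∞) c) : ContDiff ℝ ∞ (deriv c) :=
  (contDiff_infty_iff_deriv.mp (hc.of_le (by simp))).2

lemma one_le_infty : (1 : WithTop ℕ∞) ≤ (∞ : WithTop ℕ∞) := by
  exact_mod_cast le_top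

lemma hasDerivAt_comp_linear {F : Type*} [NormedAddCommGroup F] [NormedSpace ℝ F]
    (φ : Matrix (Fin n) (Fin n) ℂ →ₗ[ℝ] F) {v : Matrix (Fin n) (Fin n) ℂ} {t : ℝ}
    (hv : HasDerivAt c v t) :
    HasDerivAt (fun s => φ (c s)) (φ v) t := by
  have := (LinearMap.toContinuousLinearMap φ).hasFDerivAt.comp_hasDerivAt t hv
  exact this

lemma deriv_f_comp (l : Fin n → ℝ) (hc : ContDiff ℝ (⊤ : ℕ∞) c)
    (hM : ∀ t, c t ∈ LagrangianGrassmannianSet n) (t : ℝ) :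
    deriv ((fun y => ‖y - Matrix.diagonal (fun i => (l i : ℂ))‖ ^ 2) ∘ c) t =
      -2 * phiL n l (deriv c t) := by
  have hfun : ((fun y => ‖y - Matrix.diagonal (fun i => (l i : ℂ))‖ ^ 2) ∘ c) =
      fun s => (((n : ℝ) + ∑ j, l j ^ 2) - 2 * phiL n l (c s)) :=
    funext fun s => f_on_LG l (hM s)
  rw [hfun]
  have hv : HasDerivAt c (deriv c t) t := (curve_differentiable hc t).hasDerivAt
  have h1 : HasDerivAt (fun s => phiL n l (c s)) (phiL n l (deriv c t)) t :=
    hasDerivAt_comp_linear _ hv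
  have h2 : HasDerivAt (fun s => (((n : ℝ) + ∑ j, l j ^ 2) - 2 * phiL n l (c s)))
      (0 - 2 * phiL n l (deriv c t)) t :=
    (hasDerivAt_const t _).sub (h1.const_mul (2:ℝ))
  rw [h2.deriv]; ring

lemma deriv2_f_comp (l : Fin n → ℝ) (hc : ContDiff ℝ (⊤ : ℕ∞) c)
    (hM : ∀ t, c t ∈ LagrangianGrassmannianSet n) :
    deriv (deriv ((fun y => ‖y - Matrix.diagonal (fun i => (l i : ℂ))‖ ^ 2) ∘ c)) 0 =
      -2 * phiL n l (deriv (deriv c) 0) := by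
  have h1 : deriv ((fun y => ‖y - Matrix.diagonal (fun i => (l i : ℂ))‖ ^ 2) ∘ c) =
      fun t => -2 * phiL n l (deriv c t) := funext (deriv_f_comp l hc hM)
  rw [h1]
  have hd : HasDerivAt (deriv c) (deriv (deriv c) 0) 0 :=
    (((curve_deriv_contDiff hc).differentiable (by simp)) 0).hasDerivAt
  have h2 : HasDerivAt (fun t => phiL n l (deriv c t)) (phiL n l (deriv (deriv c) 0)) 0 :=
    hasDerivAt_comp_linear _ hd
  have h3 := (h2.const_mul (-2 : ℝ))
  rw [h3.deriv]

lemma deriv_isSymm (hc : ContDiff ℝ (⊤ : ℕ∞) c)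
    (hM : ∀ t, c t ∈ LagrangianGrassmannianSet n) (t : ℝ) :
    (deriv c t)ᵀ = deriv c t := by
  have hv : HasDerivAt c (deriv c t) t := (curve_differentiable hc t).hasDerivAt
  have h1 : HasDerivAt (fun s => transL n (c s)) (transL n (deriv c t)) t :=
    hasDerivAt_comp_linear _ hv
  have h2 : (fun s => transL n (c s)) = c := funext fun s => (hM s).1
  rw [h2] at h1
  exact h1.unique hv

lemma curve_constraint1 (hc : ContDiff ℝ (⊤ : ℕ∞) c)
    (hM : ∀ t, c t ∈ LagrangianGrassmannianSet n) (t : ℝ) :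
    (deriv c t).map (starRingEnd ℂ) * c t + (c t).map (starRingEnd ℂ) * deriv c t = 0 := by
  letI := Matrix.frobeniusNormedRing (α := ℂ) (m := Fin n)
  letI := Matrix.frobeniusNormedAlgebra (α := ℂ) (m := Fin n) (R := ℝ)
  have hv : HasDerivAt c (deriv c t) t := (curve_differentiable hc t).hasDerivAt
  have hK : HasDerivAt (fun s => conjL n (c s)) (conjL n (deriv c t)) t :=
    hasDerivAt_comp_linear _ hv
  have hmul : HasDerivAt (fun s => conjL n (c s) * c s)
      (conjL n (deriv c t) * c t + conjL n (c t) * deriv c t) t := hK.mul hv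
  have hconst : (fun s => conjL n (c s) * c s) = fun _ => (1 : Matrix (Fin n) (Fin n) ℂ) :=
    funext fun s => (hM s).2
  rw [hconst] at hmul
  exact hmul.unique (hasDerivAt_const _ _)

lemma curve_constraint2 (hc : ContDiff ℝ (⊤ : ℕ∞) c)
    (hM : ∀ t, c t ∈ LagrangianGrassmannianSet n) :
    ((deriv (deriv c) 0).map (starRingEnd ℂ) * c 0 +
      (deriv c 0).map (starRingEnd ℂ) * deriv c 0) +
    ((deriv c 0).map (starRingEnd ℂ) * deriv c 0 +
      (c 0).map (starRingEnd ℂ) * deriv (deriv c) 0) = 0 := by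
  letI := Matrix.frobeniusNormedRing (α := ℂ) (m := Fin n)
  letI := Matrix.frobeniusNormedAlgebra (α := ℂ) (m := Fin n) (R := ℝ)
  have hv : HasDerivAt c (deriv c 0) 0 := (curve_differentiable hc 0).hasDerivAt
  have hvd : HasDerivAt (deriv c) (deriv (deriv c) 0) 0 :=
    (((curve_deriv_contDiff hc).differentiable (by simp)) 0).hasDerivAt
  have h1 : HasDerivAt (fun s => conjL n (deriv c s)) (conjL n (deriv (deriv c) 0)) 0 :=
    hasDerivAt_comp_linear _ hvd
  have h2 : HasDerivAt (fun s => conjL n (c s)) (conjL n (deriv c 0)) 0 :=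
    hasDerivAt_comp_linear _ hv
  have hmul1 : HasDerivAt (fun s => conjL n (deriv c s) * c s)
      (conjL n (deriv (deriv c) 0) * c 0 + conjL n (deriv c 0) * deriv c 0) 0 := h1.mul hv
  have hmul2 : HasDerivAt (fun s => conjL n (c s) * deriv c s)
      (conjL n (deriv c 0) * deriv c 0 + conjL n (c 0) * deriv (deriv c) 0) 0 := h2.mul hvd
  have hsum := hmul1.add hmul2
  have hG : (fun s => conjL n (deriv c s) * c s + conjL n (c s) * deriv c s) =
      fun _ => (0 : Matrix (Fin n) (Fin n) ℂ) :=
    funext fun s => curve_constraint1 hc hM s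
  rw [show ((fun s => conjL n (deriv c s) * c s) + fun s => conjL n (c s) * deriv c s) =
      fun _ => (0 : Matrix (Fin n) (Fin n) ℂ) from hG] at hsum
  exact hsum.unique (hasDerivAt_const _ _)

end Curves

section Tangent

lemma conj_conj_map (x : Matrix (Fin n) (Fin n) ℂ) :
    (x.map (starRingEnd ℂ)).map (starRingEnd ℂ) = x := by
  ext i j; simp [Matrix.map_apply]

lemma transpose_map_conj (x : Matrix (Fin n) (Fin n) ℂ) :
    (x.map (starRingEnd ℂ))ᵀ = xᵀ.map (starRingEnd ℂ) := by
  ext i j; simp [Matrix.map_apply]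

/-- Characterization of the tangent set of `LG n` at a point `x ∈ LG n`. -/
theorem tangentSetAt_eq {x : Matrix (Fin n) (Fin n) ℂ} (hx : x ∈ LagrangianGrassmannianSet n) :
    TangentSetAt (LagrangianGrassmannianSet n) x =
      {v | vᵀ = v ∧ v.map (starRingEnd ℂ) * x + x.map (starRingEnd ℂ) * v = 0} := by
  ext v
  constructor
  · rintro ⟨c, hc, hM, hc0, hcv⟩
    constructor
    · rw [← hcv]; exact deriv_isSymm hc hM 0
    · rw [← hcv, ← hc0]; exact curve_constraint1 hc hM 0
  · rintro ⟨hvT, hvC⟩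
    set y := x.map (starRingEnd ℂ) with hy
    have hxs : xᵀ = x := hx.1
    have h1 : y * x = 1 := hx.2
    have h2 : x * y = 1 := mul_eq_one_comm.mp h1
    have hyT : yᵀ = y := by rw [hy, transpose_map_conj, hxs]
    set u := y * v with hu
    have hxu : x * u = v := by rw [hu, ← Matrix.mul_assoc, h2, Matrix.one_mul]
    have hveq : v = -(x * v.map (starRingEnd ℂ) * x) := by
      have h3 : y * v = -(v.map (starRingEnd ℂ) * x) :=
        eq_neg_of_add_eq_zero_right hvC
      calc v = x * (y * v) := by rw [← Matrix.mul_assoc, h2, Matrix.one_mul]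
        _ = x * -(v.map (starRingEnd ℂ) * x) := by rw [h3]
        _ = -(x * v.map (starRingEnd ℂ) * x) := by
            rw [Matrix.mul_neg, Matrix.mul_assoc]
    have hT : uᵀ = x * u * y := by
      rw [hu, Matrix.transpose_mul, hyT, hvT, hxu]
    have hC : u.map (starRingEnd ℂ) = -(x * u * y) := by
      rw [hxu, hu, Matrix.map_mul, conj_conj_map]
      have h6 : x * v.map (starRingEnd ℂ) * x = -v := by
        conv_rhs => rw [hveq]
        rw [neg_neg]
      have : x * v.map (starRingEnd ℂ) = -(v * y) := by
        rw [← Matrix.mul_one (x * v.map (starRingEnd ℂ)), ← h2, ← Matrix.mul_assoc, h6,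
          Matrix.neg_mul]
      rw [this]
    obtain ⟨c, hcd, hcM, hc0, hcv⟩ := expCurve x u hx hT hC
    exact ⟨c, hcd, hcM, hc0, hcv.trans hxu⟩

end Tangent

section Critical

/-- `σ_I` -/
def sigmaM (n : ℕ) (I : Finset (Fin n)) : Matrix (Fin n) (Fin n) ℂ :=
  Matrix.diagonal (fun j => if j ∈ I then (-1 : ℂ) else 1)

lemma sigmaM_conj (I : Finset (Fin n)) :
    (sigmaM n I).map (starRingEnd ℂ) = sigmaM n I := by
  ext i j
  by_cases h : i = j
  · subst h
    simp only [sigmaM, Matrix.map_apply, Matrix.diagonal_apply_eq]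
    split_ifs <;> simp
  · simp [sigmaM, Matrix.map_apply, Matrix.diagonal_apply_ne _ h]

lemma sigmaM_mem (I : Finset (Fin n)) : sigmaM n I ∈ LagrangianGrassmannianSet n := by
  constructor
  · exact Matrix.isSymm_diagonal _
  · rw [sigmaM_conj]
    show Matrix.diagonal _ * Matrix.diagonal _ = _
    rw [Matrix.diagonal_mul_diagonal]
    have hfun : ∀ i : Fin n, ((if i ∈ I then (-1:ℂ) else 1) * if i ∈ I then (-1:ℂ) else 1) =
        (1 : ℂ) := by
      intro i; split_ifs <;> ring
    ext i j
    rcases eq_or_ne i j with rfl | hij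
    · rw [Matrix.diagonal_apply_eq, Matrix.one_apply_eq]; exact hfun i
    · rw [Matrix.diagonal_apply_ne _ hij, Matrix.one_apply_ne hij]

lemma map_conj_sub (A B : Matrix (Fin n) (Fin n) ℂ) :
    (A - B).map (starRingEnd ℂ) = A.map (starRingEnd ℂ) - B.map (starRingEnd ℂ) := by
  ext i j; simp [Matrix.map_apply]

lemma std_transpose (j k : Fin n) (w : ℂ) :
    (Matrix.single j k w)ᵀ = Matrix.single k j w := by
  ext a b
  simp only [Matrix.transpose_apply, Matrix.single, Matrix.of_apply]
  by_cases h1 : j = b <;> by_cases h2 : k = a <;> simp [h1, h2, and_comm]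

lemma std_map_conj (j k : Fin n) (w : ℂ) :
    (Matrix.single j k w).map (starRingEnd ℂ) =
      Matrix.single j k ((starRingEnd ℂ) w) := by
  ext a b
  simp only [Matrix.map_apply, Matrix.single, Matrix.of_apply]
  split_ifs <;> simp

lemma triple_apply (x : Matrix (Fin n) (Fin n) ℂ) (j k p q : Fin n) (w : ℂ) :
    (x * Matrix.single j k w * x) p q = x p j * w * x k q := by
  rw [Matrix.mul_apply, Finset.sum_eq_single k]
  · rw [Matrix.mul_single_apply_same]
  · intro b _ hb
    simp [hb]
  · intro h; exact absurd (Finset.mem_univ k) h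

/-- the vector `x m̄ x - m` is tangent at `x` for symmetric `m` -/
lemma tangent_of_symm {x : Matrix (Fin n) (Fin n) ℂ} (hx : x ∈ LagrangianGrassmannianSet n)
    {m : Matrix (Fin n) (Fin n) ℂ} (hm : mᵀ = m) :
    (x * m.map (starRingEnd ℂ) * x - m)ᵀ = x * m.map (starRingEnd ℂ) * x - m ∧
    (x * m.map (starRingEnd ℂ) * x - m).map (starRingEnd ℂ) * x +
      x.map (starRingEnd ℂ) * (x * m.map (starRingEnd ℂ) * x - m) = 0 := by
  set y := x.map (starRingEnd ℂ) with hy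
  have hxs : xᵀ = x := hx.1
  have h1 : y * x = 1 := hx.2
  constructor
  · rw [Matrix.transpose_sub, hm, Matrix.transpose_mul, Matrix.transpose_mul,
      transpose_map_conj, hxs, hm, Matrix.mul_assoc]
  · have e1 : (x * m.map (starRingEnd ℂ) * x - m).map (starRingEnd ℂ) =
        y * m * y - m.map (starRingEnd ℂ) := by
      rw [map_conj_sub, Matrix.map_mul, Matrix.map_mul, conj_conj_map]
    rw [e1, Matrix.sub_mul, Matrix.mul_sub]
    have e2 : y * m * y * x = y * m := by
      rw [Matrix.mul_assoc (y * m) y x, h1, Matrix.mul_one]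
    have e3 : y * (x * m.map (starRingEnd ℂ) * x) = m.map (starRingEnd ℂ) * x := by
      rw [← Matrix.mul_assoc, ← Matrix.mul_assoc, h1, Matrix.one_mul]
    rw [e2, e3]
    abel

lemma critical_phi_vanish (l : Fin n → ℝ) {x : Matrix (Fin n) (Fin n) ℂ}
    (hcrit : IsCriticalPointOn (LagrangianGrassmannianSet n)
      (fun y => ‖y - Matrix.diagonal (fun i => (l i : ℂ))‖ ^ 2) x) :
    ∀ v : Matrix (Fin n) (Fin n) ℂ, vᵀ = v →
      v.map (starRingEnd ℂ) * x + x.map (starRingEnd ℂ) * v = 0 → phiL n l v = 0 := by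
  intro v hvT hvC
  have hv : v ∈ TangentSetAt (LagrangianGrassmannianSet n) x := by
    rw [tangentSetAt_eq hcrit.1]
    exact ⟨hvT, hvC⟩
  obtain ⟨c, hc, hM, hc0, hcv⟩ := hv
  have hder := hcrit.2 c hc hM hc0
  rw [deriv_f_comp l hc hM 0, show deriv c 0 = v from hcv] at hder
  linarith

lemma phi_x_std_x (l : Fin n → ℝ) {x : Matrix (Fin n) (Fin n) ℂ} (hxs : xᵀ = x)
    (j k : Fin n) (w : ℂ) :
    phiL n l (x * Matrix.single j k w * x) =
      ∑ p, l p * ((x p j * x p k) * w).re := by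
  rw [phiL_apply]
  refine Finset.sum_congr rfl fun p _ => ?_
  rw [triple_apply]
  have hsym : x k p = x p k := (congrFun (congrFun hxs k) p).symm
  rw [hsym]
  ring_nf

/-- criticality forces `x` to be a diagonal sign matrix -/
theorem critical_eq_sigma (l : Fin n → ℝ) (hpos : ∀ i, 0 < l i) (hmono : StrictMono l)
    {x : Matrix (Fin n) (Fin n) ℂ}
    (hcrit : IsCriticalPointOn (LagrangianGrassmannianSet n)
      (fun y => ‖y - Matrix.diagonal (fun i => (l i : ℂ))‖ ^ 2) x) :
    ∃ I : Finset (Fin n), x = sigmaM n I := by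
  classical
  have hx := hcrit.1
  have hphi := critical_phi_vanish l hcrit
  set y := x.map (starRingEnd ℂ) with hy
  have hxs : xᵀ = x := hx.1
  have h1 : y * x = 1 := hx.2
  have hsym : ∀ p q : Fin n, x p q = x q p :=
    fun p q => congrFun (congrFun hxs q) p
  -- the key equation
  have key : ∀ j k : Fin n, ∀ w : ℂ,
      ∑ p, l p * ((x p j * x p k) * (starRingEnd ℂ w)).re =
        (if j = k then l j * w.re else 0) := by
    intro j k w
    set m : Matrix (Fin n) (Fin n) ℂ :=
      Matrix.single j k w + Matrix.single k j w with hmdef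
    have hm : mᵀ = m := by
      rw [hmdef, Matrix.transpose_add, std_transpose, std_transpose, add_comm]
    have htang := tangent_of_symm hx hm
    have h0 := hphi _ htang.1 htang.2
    rw [map_sub] at h0
    have h2 : phiL n l (x * m.map (starRingEnd ℂ) * x) = phiL n l m := by linarith
    have h3 : phiL n l (x * m.map (starRingEnd ℂ) * x) =
        2 * ∑ p, l p * ((x p j * x p k) * (starRingEnd ℂ w)).re := by
      rw [hmdef]
      have hmap : (Matrix.single j k w + Matrix.single k j w).map
          (starRingEnd ℂ) = Matrix.single j k ((starRingEnd ℂ) w)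
            + Matrix.single k j ((starRingEnd ℂ) w) := by
        ext a b
        have e1 := congrFun (congrFun (std_map_conj (n := n) j k w) a) b
        have e2 := congrFun (congrFun (std_map_conj (n := n) k j w) a) b
        simp only [Matrix.map_apply] at e1 e2
        simp only [Matrix.map_apply, Matrix.add_apply, map_add, e1, e2]
      rw [hmap, Matrix.mul_add, Matrix.add_mul, map_add, phi_x_std_x l hxs,
        phi_x_std_x l hxs]
      have : ∀ p : Fin n, x p k * x p j = x p j * x p k := fun p => mul_comm _ _
      rw [two_mul]
      congr 1
      refine Finset.sum_congr rfl fun p _ => ?_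
      rw [this]
    have h4 : phiL n l m = if j = k then 2 * (l j * w.re) else 0 := by
      rw [phiL_apply, hmdef]
      by_cases hjk : j = k
      · subst hjk
        simp only [if_true]
        rw [Finset.sum_eq_single j]
        · simp only [Matrix.add_apply, Matrix.single_apply_same, Complex.add_re]
          ring
        · intro b _ hb
          have z : Matrix.single j j w b b = 0 := by
            apply Matrix.single_apply_of_ne
            rintro ⟨rfl, -⟩; exact hb rfl
          simp [Matrix.add_apply, z]
        · intro h; exact absurd (Finset.mem_univ j) h
      · simp only [hjk, if_false]
        apply Finset.sum_eq_zero
        intro p _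
        have z1 : Matrix.single j k w p p = 0 := by
          apply Matrix.single_apply_of_ne
          rintro ⟨rfl, rfl⟩; exact hjk rfl
        have z2 : Matrix.single k j w p p = 0 := by
          apply Matrix.single_apply_of_ne
          rintro ⟨rfl, rfl⟩; exact hjk rfl
        simp [Matrix.add_apply, z1, z2]
    rw [h3, h4] at h2
    by_cases hjk : j = k
    · simp only [hjk, if_true] at h2 ⊢
      linarith
    · simp only [hjk, if_false] at h2 ⊢
      linarith
  -- complex form of key
  have keyC : ∀ j k : Fin n, ∑ p, (l p : ℂ) * (x p j * x p k) =
      (if j = k then (l j : ℂ) else 0) := by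
    intro j k
    have hre := key j k 1
    have him := key j k Complex.I
    have hre' : ∑ p, l p * (x p j * x p k).re = if j = k then l j else 0 := by
      simpa using hre
    have him' : ∑ p, l p * (x p j * x p k).im = 0 := by
      have e : ∀ p : Fin n, l p * ((x p j * x p k) * (starRingEnd ℂ) Complex.I).re
          = l p * (x p j * x p k).im := by
        intro p
        congr 1
        rw [Complex.conj_I]
        simp [Complex.mul_re]
      rw [Finset.sum_congr rfl (fun p _ => e p)] at him
      simpa using him
    apply Complex.ext
    · rw [Complex.re_sum]
      have e : ∀ p : Fin n, ((l p : ℂ) * (x p j * x p k)).re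
          = l p * (x p j * x p k).re := by
        intro p; rw [Complex.mul_re]; simp
      rw [Finset.sum_congr rfl (fun p _ => e p), hre']
      split_ifs <;> simp
    · rw [Complex.im_sum]
      have e : ∀ p : Fin n, ((l p : ℂ) * (x p j * x p k)).im
          = l p * (x p j * x p k).im := by
        intro p; rw [Complex.mul_im]; simp
      rw [Finset.sum_congr rfl (fun p _ => e p), him']
      split_ifs <;> simp
  -- x * a * x = a
  set a : Matrix (Fin n) (Fin n) ℂ := Matrix.diagonal (fun i => (l i : ℂ)) with ha
  have hxa : x * a * x = a := by
    ext j k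
    rw [Matrix.mul_apply]
    have e : ∀ q : Fin n, (x * a) j q * x q k = (l q : ℂ) * (x q j * x q k) := by
      intro q
      rw [ha, Matrix.mul_diagonal, hsym j q]
      ring
    rw [Finset.sum_congr rfl (fun q _ => e q), keyC j k]
    by_cases hjk : j = k
    · subst hjk; simp [ha, Matrix.diagonal_apply_eq]
    · simp [ha, hjk, Matrix.diagonal_apply_ne _ hjk]
  have hax : a * x = y * a := by
    calc a * x = (y * x) * (a * x) := by rw [h1, Matrix.one_mul]
      _ = y * (x * a * x) := by
          rw [Matrix.mul_assoc y x (a * x), ← Matrix.mul_assoc x a x]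
      _ = y * a := by rw [hxa]
  have hentry : ∀ j k : Fin n, (l j : ℂ) * x j k = (starRingEnd ℂ) (x j k) * (l k : ℂ) := by
    intro j k
    have h5 := congrFun (congrFun hax j) k
    rw [ha, Matrix.diagonal_mul, Matrix.mul_diagonal] at h5
    exact h5
  have hoff : ∀ j k : Fin n, j ≠ k → x j k = 0 := by
    intro j k hjk
    have h5 := hentry j k
    have h6 := congrArg (starRingEnd ℂ) h5
    simp only [_root_.map_mul, Complex.conj_conj, Complex.conj_ofReal] at h6
    have h7 : ((l j : ℂ)^2 - (l k : ℂ)^2) * x j k = 0 := by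
      calc ((l j : ℂ)^2 - (l k : ℂ)^2) * x j k
          = (l j : ℂ) * ((l j : ℂ) * x j k) - (l k : ℂ)^2 * x j k := by ring
        _ = (l j : ℂ) * ((starRingEnd ℂ) (x j k) * (l k : ℂ)) - (l k : ℂ)^2 * x j k := by
            rw [h5]
        _ = ((l j : ℂ) * (starRingEnd ℂ) (x j k)) * (l k : ℂ) - (l k : ℂ)^2 * x j k := by
            ring
        _ = (x j k * (l k : ℂ)) * (l k : ℂ) - (l k : ℂ)^2 * x j k := by rw [h6]
        _ = 0 := by ring
    rcases mul_eq_zero.mp h7 with h8 | h8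
    · exfalso
      have h9 : (l j : ℂ)^2 = (l k : ℂ)^2 := by
        have := sub_eq_zero.mp h8
        exact this
      have hreal : l j ^ 2 = l k ^ 2 := by exact_mod_cast h9
      rcases lt_trichotomy j k with hlt | heq | hgt
      · have := hmono hlt; nlinarith [hpos j, hpos k]
      · exact hjk heq
      · have := hmono hgt; nlinarith [hpos j, hpos k]
    · exact h8
  have hdiagreal : ∀ j : Fin n, (starRingEnd ℂ) (x j j) = x j j := by
    intro j
    have h5 := hentry j j
    have hl : (l j : ℂ) ≠ 0 := by
      exact_mod_cast (hpos j).ne'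
    have h6 : (l j : ℂ) * x j j = (l j : ℂ) * (starRingEnd ℂ) (x j j) := by
      rw [h5]; ring
    exact (mul_left_cancel₀ hl h6).symm
  have hunit : ∀ j : Fin n, x j j * x j j = 1 := by
    intro j
    have h8 := congrFun (congrFun h1 j) j
    have hsum : ∑ b, y j b * x b j = y j j * x j j := by
      apply Finset.sum_eq_single_of_mem j (Finset.mem_univ j)
      intro b _ hb
      rw [hoff b j hb, mul_zero]
    rw [Matrix.mul_apply, hsum, Matrix.one_apply_eq] at h8
    have hyx : y j j = (starRingEnd ℂ) (x j j) := rfl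
    rw [hyx, hdiagreal j] at h8
    exact h8
  have hpm : ∀ j : Fin n, x j j = 1 ∨ x j j = -1 := fun j => mul_self_eq_one_iff.mp (hunit j)
  refine ⟨Finset.univ.filter (fun j => x j j = -1), ?_⟩
  ext p q
  rcases eq_or_ne p q with rfl | hpq
  · rw [sigmaM, Matrix.diagonal_apply_eq]
    simp only [Finset.mem_filter, Finset.mem_univ, true_and]
    rcases hpm p with h | h <;> rw [h] <;> norm_num
  · rw [sigmaM, Matrix.diagonal_apply_ne _ hpq]
    exact hoff p q hpq

/-- every `σ_I` is a critical point -/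
theorem sigma_critical (l : Fin n → ℝ) (I : Finset (Fin n)) :
    IsCriticalPointOn (LagrangianGrassmannianSet n)
      (fun y => ‖y - Matrix.diagonal (fun i => (l i : ℂ))‖ ^ 2) (sigmaM n I) := by
  refine ⟨sigmaM_mem I, ?_⟩
  intro c hc hM hc0
  rw [deriv_f_comp l hc hM 0]
  have hphi0 : phiL n l (deriv c 0) = 0 := by
    have hC := curve_constraint1 hc hM 0
    rw [hc0, sigmaM_conj] at hC
    rw [phiL_apply]
    apply Finset.sum_eq_zero
    intro j _
    have h5 := congrFun (congrFun hC j) j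
    have e1 : ((deriv c 0).map (starRingEnd ℂ) * sigmaM n I) j j =
        (starRingEnd ℂ) (deriv c 0 j j) * (if j ∈ I then (-1:ℂ) else 1) := by
      rw [sigmaM, Matrix.mul_diagonal]
      rfl
    have e2 : (sigmaM n I * deriv c 0) j j = (if j ∈ I then (-1:ℂ) else 1) * deriv c 0 j j := by
      rw [sigmaM, Matrix.diagonal_mul]
    rw [Matrix.add_apply, e1, e2, Matrix.zero_apply] at h5
    have h6 : (starRingEnd ℂ) (deriv c 0 j j) + deriv c 0 j j = 0 := by
      by_cases hj : j ∈ I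
      · simp only [hj, if_true] at h5
        have : -((starRingEnd ℂ) (deriv c 0 j j) + deriv c 0 j j) = 0 := by
          rw [← h5]; ring
        linear_combination -this
      · simp only [hj, if_false] at h5
        linear_combination h5
    have h7 := congrArg Complex.re h6
    simp only [Complex.add_re, Complex.conj_re, Complex.zero_re] at h7
    have : (deriv c 0 j j).re = 0 := by linarith
    rw [this, mul_zero]
  rw [hphi0]
  ring

end Critical

section Hessian

/-- sign vector -/
def epsR (I : Finset (Fin n)) (j : Fin n) : ℝ := if j ∈ I then -1 else 1

lemma epsC_eq (I : Finset (Fin n)) (j : Fin n) :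
    (if j ∈ I then (-1 : ℂ) else 1) = ((epsR I j : ℝ) : ℂ) := by
  rw [epsR]; split_ifs <;> simp

/-- the Hessian bilinear form at `σ_I` -/
noncomputable def BL (n : ℕ) (l : Fin n → ℝ) (I : Finset (Fin n)) :
    Matrix (Fin n) (Fin n) ℂ →ₗ[ℝ] Matrix (Fin n) (Fin n) ℂ →ₗ[ℝ] ℝ :=
  LinearMap.mk₂ ℝ
    (fun u w => ∑ j, ∑ k, (2 * l j * epsR I j) *
      ((u j k).re * (w j k).re + (u j k).im * (w j k).im))
    (by
      intro u u' w
      rw [← Finset.sum_add_distrib]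
      refine Finset.sum_congr rfl fun j _ => ?_
      rw [← Finset.sum_add_distrib]
      refine Finset.sum_congr rfl fun k _ => ?_
      simp only [Matrix.add_apply, Complex.add_re, Complex.add_im]
      ring)
    (by
      intro r u w
      simp only [smul_eq_mul, Finset.mul_sum]
      refine Finset.sum_congr rfl fun j _ => Finset.sum_congr rfl fun k _ => ?_
      simp only [Matrix.smul_apply, Complex.real_smul, Complex.mul_re, Complex.mul_im,
        Complex.ofReal_re, Complex.ofReal_im]
      ring)
    (by
      intro u w w'
      rw [← Finset.sum_add_distrib]
      refine Finset.sum_congr rfl fun j _ => ?_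
      rw [← Finset.sum_add_distrib]
      refine Finset.sum_congr rfl fun k _ => ?_
      simp only [Matrix.add_apply, Complex.add_re, Complex.add_im]
      ring)
    (by
      intro r u w
      simp only [smul_eq_mul, Finset.mul_sum]
      refine Finset.sum_congr rfl fun j _ => Finset.sum_congr rfl fun k _ => ?_
      simp only [Matrix.smul_apply, Complex.real_smul, Complex.mul_re, Complex.mul_im,
        Complex.ofReal_re, Complex.ofReal_im]
      ring)

lemma BL_apply (l : Fin n → ℝ) (I : Finset (Fin n)) (u w : Matrix (Fin n) (Fin n) ℂ) :
    BL n l I u w = ∑ j, ∑ k, (2 * l j * epsR I j) *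
      ((u j k).re * (w j k).re + (u j k).im * (w j k).im) := rfl

theorem hessian_at_sigma (l : Fin n → ℝ) (I : Finset (Fin n)) :
    IsHessianAt (LagrangianGrassmannianSet n)
      (fun y => ‖y - Matrix.diagonal (fun i => (l i : ℂ))‖ ^ 2) (sigmaM n I) (BL n l I) := by
  intro c hc hM hc0
  rw [deriv2_f_comp l hc hM]
  set v := deriv c 0 with hv
  set w := deriv (deriv c) 0 with hw
  have hvs : vᵀ = v := deriv_isSymm hc hM 0
  have hC2 := curve_constraint2 hc hM
  rw [hc0, sigmaM_conj] at hC2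
  -- value of `(v̄ v) j j`
  have hvv : ∀ j : Fin n, (v.map (starRingEnd ℂ) * v) j j =
      ((∑ k, Complex.normSq (v j k) : ℝ) : ℂ) := by
    intro j
    rw [Matrix.mul_apply, Complex.ofReal_sum]
    refine Finset.sum_congr rfl fun k _ => ?_
    have hkj : v k j = v j k := by
      have := congrFun (congrFun hvs k) j
      exact this.symm
    show (starRingEnd ℂ) (v j k) * v k j = _
    rw [hkj]
    exact (Complex.normSq_eq_conj_mul_self).symm
  have hwre : ∀ j : Fin n, (w j j).re = - epsR I j * ∑ k, Complex.normSq (v j k) := by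
    intro j
    have h5 := congrFun (congrFun hC2 j) j
    have e1 : (w.map (starRingEnd ℂ) * sigmaM n I) j j =
        (starRingEnd ℂ) (w j j) * (if j ∈ I then (-1:ℂ) else 1) := by
      rw [sigmaM, Matrix.mul_diagonal]
      rfl
    have e2 : (sigmaM n I * w) j j = (if j ∈ I then (-1:ℂ) else 1) * w j j := by
      rw [sigmaM, Matrix.diagonal_mul]
    rw [Matrix.add_apply, Matrix.add_apply, Matrix.add_apply, Matrix.zero_apply,
      e1, e2, hvv j] at h5
    have h6 := congrArg Complex.re h5
    simp only [Complex.add_re, Complex.mul_re, Complex.conj_re, Complex.conj_im,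
      Complex.ofReal_re, Complex.ofReal_im, Complex.zero_re] at h6
    by_cases hj : j ∈ I
    · simp only [hj, if_true, Complex.neg_re, Complex.neg_im, Complex.one_re,
        Complex.one_im, epsR] at h6 ⊢
      linarith
    · simp only [hj, if_false, Complex.one_re, Complex.one_im, epsR] at h6 ⊢
      linarith
  have hphiw : phiL n l w = - ∑ j, l j * (epsR I j * ∑ k, Complex.normSq (v j k)) := by
    rw [phiL_apply, ← Finset.sum_neg_distrib]
    refine Finset.sum_congr rfl fun j _ => ?_
    rw [hwre j]
    ring
  have hBL : BL n l I v v = ∑ j, 2 * l j * epsR I j * ∑ k, Complex.normSq (v j k) := by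
    rw [BL_apply]
    refine Finset.sum_congr rfl fun j _ => ?_
    rw [Finset.mul_sum]
    refine Finset.sum_congr rfl fun k _ => ?_
    rw [Complex.normSq_apply]
  change _ = BL n l I v v
  rw [hphiw, hBL, neg_mul_neg, Finset.mul_sum]
  exact Finset.sum_congr rfl fun j _ => by ring

lemma BL_std (l : Fin n → ℝ) (I : Finset (Fin n)) (u : Matrix (Fin n) (Fin n) ℂ)
    (p q : Fin n) (z : ℂ) :
    BL n l I u (Matrix.single p q z) =
      2 * l p * epsR I p * ((u p q).re * z.re + (u p q).im * z.im) := by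
  rw [BL_apply, Finset.sum_eq_single p]
  · rw [Finset.sum_eq_single q]
    · rw [Matrix.single_apply_same]
    · intro b _ hb
      have z0 : Matrix.single p q z p b = 0 := by
        apply Matrix.single_apply_of_ne
        rintro ⟨-, rfl⟩; exact hb rfl
      rw [z0]
      simp
    · intro h; exact absurd (Finset.mem_univ q) h
  · intro a _ ha
    apply Finset.sum_eq_zero
    intro k _
    have z0 : Matrix.single p q z a k = 0 := by
      apply Matrix.single_apply_of_ne
      rintro ⟨rfl, -⟩; exact ha rfl
    rw [z0]
    simp
  · intro h; exact absurd (Finset.mem_univ p) h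

lemma coef_ne (l : Fin n → ℝ) (hpos : ∀ i, 0 < l i) (hmono : StrictMono l)
    (I : Finset (Fin n)) {p q : Fin n} (hpq : p ≠ q) :
    l p * epsR I p + l q * epsR I q ≠ 0 := by
  have hlpq : l p ≠ l q := fun h => hpq (hmono.injective h)
  rw [epsR, epsR]
  by_cases hp : p ∈ I <;> by_cases hq : q ∈ I <;> simp only [hp, hq, if_true, if_false]
  · nlinarith [hpos p, hpos q]
  · intro h; apply hlpq; linarith
  · intro h; apply hlpq; linarith
  · nlinarith [hpos p, hpos q]

theorem nondeg_at_sigma (l : Fin n → ℝ) (hpos : ∀ i, 0 < l i) (hmono : StrictMono l)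
    (I : Finset (Fin n)) :
    ∀ u ∈ TangentSetAt (LagrangianGrassmannianSet n) (sigmaM n I),
      (∀ w ∈ TangentSetAt (LagrangianGrassmannianSet n) (sigmaM n I), BL n l I u w = 0) →
        u = 0 := by
  intro u hu hBu
  rw [tangentSetAt_eq (sigmaM_mem I)] at hu
  obtain ⟨huT, huC⟩ := hu
  rw [sigmaM_conj] at huC
  have husym : ∀ p q : Fin n, u q p = u p q := by
    intro p q
    have := congrFun (congrFun huT q) p
    exact this.symm
  have hcon : ∀ p q : Fin n, (starRingEnd ℂ) (u p q) * (if q ∈ I then (-1:ℂ) else 1) +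
      (if p ∈ I then (-1:ℂ) else 1) * u p q = 0 := by
    intro p q
    have h5 := congrFun (congrFun huC p) q
    have e1 : (u.map (starRingEnd ℂ) * sigmaM n I) p q =
        (starRingEnd ℂ) (u p q) * (if q ∈ I then (-1:ℂ) else 1) := by
      rw [sigmaM, Matrix.mul_diagonal]
      rfl
    have e2 : (sigmaM n I * u) p q = (if p ∈ I then (-1:ℂ) else 1) * u p q := by
      rw [sigmaM, Matrix.diagonal_mul]
    rwa [Matrix.add_apply, Matrix.zero_apply, e1, e2] at h5
  -- test matrices are tangent
  have htest : ∀ p q : Fin n,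
      Matrix.single p q (u p q) + Matrix.single q p (u p q) ∈
        TangentSetAt (LagrangianGrassmannianSet n) (sigmaM n I) := by
    intro p q
    rw [tangentSetAt_eq (sigmaM_mem I)]
    set m := Matrix.single p q (u p q) + Matrix.single q p (u p q) with hm
    constructor
    · rw [hm, Matrix.transpose_add, std_transpose, std_transpose, add_comm]
    · rw [sigmaM_conj]
      ext r s
      have e1 : (m.map (starRingEnd ℂ) * sigmaM n I) r s =
          (starRingEnd ℂ) (m r s) * (if s ∈ I then (-1:ℂ) else 1) := by
        rw [sigmaM, Matrix.mul_diagonal]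
        rfl
      have e2 : (sigmaM n I * m) r s = (if r ∈ I then (-1:ℂ) else 1) * m r s := by
        rw [sigmaM, Matrix.diagonal_mul]
      rw [Matrix.add_apply, Matrix.zero_apply, e1, e2]
      rcases eq_or_ne (p, q) (r, s) with heq | hne1
      · injection heq with h1 h2
        subst h1; subst h2
        rcases eq_or_ne p q with rfl | hpq
        · have hval : m p p = u p p + u p p := by
            rw [hm, Matrix.add_apply, Matrix.single_apply_same]
          rw [hval, map_add]
          linear_combination (2:ℂ) * hcon p p
        · have hz : Matrix.single q p (u p q) p q = 0 := by
            apply Matrix.single_apply_of_ne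
            rintro ⟨rfl, -⟩; exact hpq rfl
          have hval : m p q = u p q := by
            rw [hm, Matrix.add_apply, Matrix.single_apply_same, hz, add_zero]
          rw [hval]
          exact hcon p q
      · rcases eq_or_ne (q, p) (r, s) with heq2 | hne2
        · injection heq2 with h1 h2
          subst h1; subst h2
          have hpq : p ≠ q := by
            intro h
            subst h
            exact hne1 rfl
          have hz : Matrix.single p q (u p q) q p = 0 := by
            apply Matrix.single_apply_of_ne
            rintro ⟨rfl, -⟩; exact hpq rfl
          have hval : m q p = u q p := by
            rw [hm, Matrix.add_apply, hz, Matrix.single_apply_same, zero_add,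
              husym p q]
          rw [hval]
          exact hcon q p
        · have hz : m r s = 0 := by
            rw [hm, Matrix.add_apply]
            have z1 : Matrix.single p q (u p q) r s = 0 := by
              apply Matrix.single_apply_of_ne
              rintro ⟨rfl, rfl⟩; exact hne1 rfl
            have z2 : Matrix.single q p (u p q) r s = 0 := by
              apply Matrix.single_apply_of_ne
              rintro ⟨rfl, rfl⟩; exact hne2 rfl
            rw [z1, z2, add_zero]
          rw [hz]
          simp
  ext p q
  rw [Matrix.zero_apply]
  have hB := hBu _ (htest p q)
  rw [map_add, BL_std, BL_std, husym p q] at hB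
  rcases eq_or_ne p q with rfl | hpq
  · have : (2 * l p * epsR I p + 2 * l p * epsR I p) * Complex.normSq (u p p) = 0 := by
      rw [Complex.normSq_apply]
      linarith [hB]
    have hne : (2 * l p * epsR I p + 2 * l p * epsR I p) ≠ 0 := by
      rw [epsR]
      split_ifs <;> nlinarith [hpos p]
    have := (mul_eq_zero.mp this).resolve_left hne
    exact Complex.normSq_eq_zero.mp this
  · have : (2 * (l p * epsR I p + l q * epsR I q)) * Complex.normSq (u p q) = 0 := by
      rw [Complex.normSq_apply]
      linarith [hB]
    have hne : (2 * (l p * epsR I p + l q * epsR I q)) ≠ 0 := by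
      have := coef_ne l hpos hmono I hpq
      intro h
      apply this
      linarith
    have := (mul_eq_zero.mp this).resolve_left hne
    exact Complex.normSq_eq_zero.mp this

end Hessian

section Index

/-- tangent space at `σ_I` as a submodule -/
noncomputable def Tsub (n : ℕ) (I : Finset (Fin n)) : Submodule ℝ (Matrix (Fin n) (Fin n) ℂ) where
  carrier := {v | vᵀ = v ∧
    v.map (starRingEnd ℂ) * sigmaM n I + sigmaM n I * v = 0}
  zero_mem' := by
    constructor
    · ext i j; simp
    · have : (0 : Matrix (Fin n) (Fin n) ℂ).map (starRingEnd ℂ) = 0 := by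
        ext i j; simp
      rw [this, Matrix.zero_mul, Matrix.mul_zero, add_zero]
  add_mem' := by
    rintro a b ⟨haT, haC⟩ ⟨hbT, hbC⟩
    constructor
    · rw [Matrix.transpose_add, haT, hbT]
    · have hmap : (a + b).map (starRingEnd ℂ) =
          a.map (starRingEnd ℂ) + b.map (starRingEnd ℂ) := by
        ext i j; simp [Matrix.map_apply]
      rw [hmap, Matrix.add_mul, Matrix.mul_add, add_add_add_comm, haC, hbC, add_zero]
  smul_mem' := by
    rintro r v ⟨hvT, hvC⟩
    constructor
    · rw [Matrix.transpose_smul, hvT]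
    · have hmap : (r • v).map (starRingEnd ℂ) = r • v.map (starRingEnd ℂ) := by
        ext i j; simp [Matrix.map_apply, Complex.real_smul]
      rw [hmap, Matrix.smul_mul, Matrix.mul_smul, ← smul_add, hvC, smul_zero]

lemma tangent_eq_Tsub (I : Finset (Fin n)) :
    TangentSetAt (LagrangianGrassmannianSet n) (sigmaM n I) = (Tsub n I : Set _) := by
  rw [tangentSetAt_eq (sigmaM_mem I)]
  ext v
  constructor
  · rintro ⟨h1, h2⟩
    exact ⟨h1, by rwa [sigmaM_conj] at h2⟩
  · rintro ⟨h1, h2⟩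
    exact ⟨h1, by rwa [sigmaM_conj]⟩

/-- support submodule for a symmetric predicate on index pairs -/
noncomputable def suppP (n : ℕ) (P : Fin n × Fin n → Prop) : Submodule ℝ (Matrix (Fin n) (Fin n) ℂ) where
  carrier := {v | ∀ j k : Fin n, ¬ P (j, k) → v j k = 0}
  zero_mem' := fun j k _ => rfl
  add_mem' := by
    intro a b ha hb j k h
    rw [Matrix.add_apply, ha j k h, hb j k h, add_zero]
  smul_mem' := by
    intro r v hv j k h
    rw [Matrix.smul_apply, hv j k h, smul_zero]

lemma Tsub_entry {I : Finset (Fin n)} {v : Matrix (Fin n) (Fin n) ℂ} (hv : v ∈ Tsub n I)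
    (j k : Fin n) :
    (starRingEnd ℂ) (v j k) * (if k ∈ I then (-1:ℂ) else 1) +
      (if j ∈ I then (-1:ℂ) else 1) * v j k = 0 := by
  have h5 := congrFun (congrFun hv.2 j) k
  have e1 : (v.map (starRingEnd ℂ) * sigmaM n I) j k =
      (starRingEnd ℂ) (v j k) * (if k ∈ I then (-1:ℂ) else 1) := by
    rw [sigmaM, Matrix.mul_diagonal]
    rfl
  have e2 : (sigmaM n I * v) j k = (if j ∈ I then (-1:ℂ) else 1) * v j k := by
    rw [sigmaM, Matrix.diagonal_mul]
  rwa [Matrix.add_apply, Matrix.zero_apply, e1, e2] at h5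

/-- direction unit for a pair -/
def om (I : Finset (Fin n)) (j k : Fin n) : ℂ :=
  if ((j ∈ I) ↔ (k ∈ I)) then Complex.I else 1

lemma om_symm (I : Finset (Fin n)) (j k : Fin n) : om I j k = om I k j := by
  unfold om
  by_cases hj : j ∈ I <;> by_cases hk : k ∈ I <;> simp [hj, hk]

lemma om_ne_zero (I : Finset (Fin n)) (j k : Fin n) : om I j k ≠ 0 := by
  unfold om
  split_ifs
  · exact Complex.I_ne_zero
  · exact one_ne_zero

/-- the entries of a tangent matrix at `σ_I` lie on the line `ℝ · om` -/
lemma Tsub_entry_form {I : Finset (Fin n)} {v : Matrix (Fin n) (Fin n) ℂ} (hv : v ∈ Tsub n I)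
    (j k : Fin n) :
    v j k = ((if (j ∈ I) ↔ (k ∈ I) then (v j k).im else (v j k).re : ℝ) : ℂ) * om I j k := by
  have hc := Tsub_entry hv j k
  by_cases hj : j ∈ I <;> by_cases hk : k ∈ I
  · rw [if_pos hk, if_pos hj] at hc
    have hiff : ((j ∈ I) ↔ (k ∈ I)) := iff_of_true hj hk
    rw [if_pos hiff, om, if_pos hiff]
    have hz : (starRingEnd ℂ) (v j k) = -(v j k) := by linear_combination -hc
    have hre : (v j k).re = 0 := by
      have := congrArg Complex.re hz
      simp only [Complex.conj_re, Complex.neg_re] at this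
      linarith
    apply Complex.ext <;>
      simp [Complex.mul_re, Complex.mul_im, hre]
  · rw [if_neg hk, if_pos hj] at hc
    have hiff : ¬((j ∈ I) ↔ (k ∈ I)) := fun h => hk (h.mp hj)
    rw [if_neg hiff, om, if_neg hiff]
    have hz : (starRingEnd ℂ) (v j k) = v j k := by linear_combination hc
    have him : (v j k).im = 0 := by
      have := congrArg Complex.im hz
      simp only [Complex.conj_im] at this
      linarith
    apply Complex.ext <;>
      simp [Complex.mul_re, Complex.mul_im, him]
  · rw [if_pos hk, if_neg hj] at hc
    have hiff : ¬((j ∈ I) ↔ (k ∈ I)) := fun h => hj (h.mpr hk)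
    rw [if_neg hiff, om, if_neg hiff]
    have hz : (starRingEnd ℂ) (v j k) = v j k := by linear_combination -hc
    have him : (v j k).im = 0 := by
      have := congrArg Complex.im hz
      simp only [Complex.conj_im] at this
      linarith
    apply Complex.ext <;>
      simp [Complex.mul_re, Complex.mul_im, him]
  · rw [if_neg hk, if_neg hj] at hc
    have hiff : ((j ∈ I) ↔ (k ∈ I)) := iff_of_false hj hk
    rw [if_pos hiff, om, if_pos hiff]
    have hz : (starRingEnd ℂ) (v j k) = -(v j k) := by linear_combination hc
    have hre : (v j k).re = 0 := by
      have := congrArg Complex.re hz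
      simp only [Complex.conj_re, Complex.neg_re] at this
      linarith
    apply Complex.ext <;>
      simp [Complex.mul_re, Complex.mul_im, hre]

lemma om_constraint (I : Finset (Fin n)) (j k : Fin n) :
    (starRingEnd ℂ) (om I j k) * (if k ∈ I then (-1:ℂ) else 1) +
      (if j ∈ I then (-1:ℂ) else 1) * om I j k = 0 := by
  unfold om
  by_cases hj : j ∈ I <;> by_cases hk : k ∈ I
  · rw [if_pos (iff_of_true hj hk), if_pos hk, if_pos hj, Complex.conj_I]; ring
  · rw [if_neg (fun h => hk ((Iff.mp h) hj)), if_neg hk, if_pos hj, _root_.map_one]; ring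
  · rw [if_neg (fun h => hj ((Iff.mpr h) hk)), if_pos hk, if_neg hj, _root_.map_one]; ring
  · rw [if_pos (iff_of_false hj hk), if_neg hk, if_neg hj, Complex.conj_I]; ring

lemma line_constraint (I : Finset (Fin n)) (r : ℝ) (j k : Fin n) :
    (starRingEnd ℂ) ((r : ℂ) * om I j k) * (if k ∈ I then (-1:ℂ) else 1) +
      (if j ∈ I then (-1:ℂ) else 1) * ((r : ℂ) * om I j k) = 0 := by
  rw [_root_.map_mul, Complex.conj_ofReal]
  linear_combination (r : ℂ) * om_constraint I j k

lemma mem_Tsub_of_entries {I : Finset (Fin n)} {v : Matrix (Fin n) (Fin n) ℂ}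
    (hT : vᵀ = v)
    (hC : ∀ j k : Fin n, (starRingEnd ℂ) (v j k) * (if k ∈ I then (-1:ℂ) else 1) +
      (if j ∈ I then (-1:ℂ) else 1) * v j k = 0) : v ∈ Tsub n I := by
  refine ⟨hT, ?_⟩
  ext j k
  have e1 : (v.map (starRingEnd ℂ) * sigmaM n I) j k =
      (starRingEnd ℂ) (v j k) * (if k ∈ I then (-1:ℂ) else 1) := by
    rw [sigmaM, Matrix.mul_diagonal]
    rfl
  have e2 : (sigmaM n I * v) j k = (if j ∈ I then (-1:ℂ) else 1) * v j k := by
    rw [sigmaM, Matrix.diagonal_mul]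
  rw [Matrix.add_apply, Matrix.zero_apply, e1, e2]
  exact hC j k

/-- the matrix with prescribed coordinates on admissible pairs -/
noncomputable def mkMat (I : Finset (Fin n)) (P : Fin n × Fin n → Prop) [DecidablePred P]
    (f : {p : Fin n × Fin n // p.1 ≤ p.2 ∧ P p} → ℝ) : Matrix (Fin n) (Fin n) ℂ :=
  Matrix.of fun j k =>
    if h : j ≤ k ∧ P (j, k) then ((f ⟨(j, k), h⟩ : ℝ) : ℂ) * om I j k
    else if h' : k ≤ j ∧ P (k, j) then ((f ⟨(k, j), h'⟩ : ℝ) : ℂ) * om I k j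
    else 0

lemma mkMat_apply (I : Finset (Fin n)) (P : Fin n × Fin n → Prop) [DecidablePred P]
    (f : {p : Fin n × Fin n // p.1 ≤ p.2 ∧ P p} → ℝ) (j k : Fin n) :
    mkMat I P f j k =
      if h : j ≤ k ∧ P (j, k) then ((f ⟨(j, k), h⟩ : ℝ) : ℂ) * om I j k
      else if h' : k ≤ j ∧ P (k, j) then ((f ⟨(k, j), h'⟩ : ℝ) : ℂ) * om I k j
      else 0 := rfl

lemma mkMat_symm (I : Finset (Fin n)) (P : Fin n × Fin n → Prop) [DecidablePred P]
    (f : {p : Fin n × Fin n // p.1 ≤ p.2 ∧ P p} → ℝ) : (mkMat I P f)ᵀ = mkMat I P f := by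
  ext j k
  rw [Matrix.transpose_apply, mkMat_apply, mkMat_apply]
  by_cases h1 : j ≤ k ∧ P (j, k) <;> by_cases h2 : k ≤ j ∧ P (k, j)
  · have hjk : j = k := le_antisymm h1.1 h2.1
    subst hjk
    rfl
  · rw [dif_neg h2, dif_pos h1, dif_pos h1]
  · rw [dif_pos h2, dif_neg h1, dif_pos h2]
  · rw [dif_neg h2, dif_neg h1, dif_neg h1, dif_neg h2]

lemma mkMat_entry_line (I : Finset (Fin n)) (P : Fin n × Fin n → Prop) [DecidablePred P]
    (f : {p : Fin n × Fin n // p.1 ≤ p.2 ∧ P p} → ℝ) (j k : Fin n) :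
    ∃ r : ℝ, mkMat I P f j k = (r : ℂ) * om I j k := by
  rw [mkMat_apply]
  by_cases h1 : j ≤ k ∧ P (j, k)
  · exact ⟨f ⟨(j, k), h1⟩, by rw [dif_pos h1]⟩
  · by_cases h2 : k ≤ j ∧ P (k, j)
    · exact ⟨f ⟨(k, j), h2⟩, by rw [dif_neg h1, dif_pos h2, om_symm I k j]⟩
    · exact ⟨0, by rw [dif_neg h1, dif_neg h2, Complex.ofReal_zero, zero_mul]⟩

lemma mkMat_mem (I : Finset (Fin n)) (P : Fin n × Fin n → Prop) [DecidablePred P]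
    (hPs : ∀ j k : Fin n, P (j, k) → P (k, j))
    (f : {p : Fin n × Fin n // p.1 ≤ p.2 ∧ P p} → ℝ) :
    mkMat I P f ∈ Tsub n I ⊓ suppP n P := by
  constructor
  · apply mem_Tsub_of_entries (mkMat_symm I P f)
    intro j k
    obtain ⟨r, hr⟩ := mkMat_entry_line I P f j k
    rw [hr]
    exact line_constraint I r j k
  · intro j k hP
    rw [mkMat_apply, dif_neg (fun h => hP h.2), dif_neg (fun h => hP (hPs k j h.2))]

/-- coordinate extraction -/
noncomputable def XiL (n : ℕ) (I : Finset (Fin n)) (P : Fin n × Fin n → Prop) [DecidablePred P] :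
    Matrix (Fin n) (Fin n) ℂ →ₗ[ℝ] ({p : Fin n × Fin n // p.1 ≤ p.2 ∧ P p} → ℝ) where
  toFun v := fun p =>
    if (p.1.1 ∈ I) ↔ (p.1.2 ∈ I) then (v p.1.1 p.1.2).im else (v p.1.1 p.1.2).re
  map_add' u v := by
    funext p
    by_cases h : (p.1.1 ∈ I) ↔ (p.1.2 ∈ I) <;> simp [h]
  map_smul' r v := by
    funext p
    by_cases h : (p.1.1 ∈ I) ↔ (p.1.2 ∈ I) <;>
      simp [h, Complex.real_smul, Complex.mul_im, Complex.mul_re]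

lemma Xi_mkMat (I : Finset (Fin n)) (P : Fin n × Fin n → Prop) [DecidablePred P]
    (f : {p : Fin n × Fin n // p.1 ≤ p.2 ∧ P p} → ℝ) :
    XiL n I P (mkMat I P f) = f := by
  funext p
  obtain ⟨⟨j, k⟩, hjk, hP⟩ := p
  show (if (j ∈ I) ↔ (k ∈ I) then (mkMat I P f j k).im else (mkMat I P f j k).re) = _
  have hval : mkMat I P f j k = ((f ⟨(j, k), ⟨hjk, hP⟩⟩ : ℝ) : ℂ) * om I j k := by
    rw [mkMat_apply, dif_pos (⟨hjk, hP⟩ : j ≤ k ∧ P (j, k))]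
  rw [hval, om]
  by_cases h : (j ∈ I) ↔ (k ∈ I)
  · rw [if_pos h, if_pos h]
    simp
  · rw [if_neg h, if_neg h]
    simp

lemma Xi_inj (I : Finset (Fin n)) (P : Fin n × Fin n → Prop) [DecidablePred P]
    {v : Matrix (Fin n) (Fin n) ℂ} (hv : v ∈ Tsub n I ⊓ suppP n P)
    (h0 : XiL n I P v = 0) : v = 0 := by
  obtain ⟨hvT, hvS⟩ := hv
  have hmain : ∀ j k : Fin n, j ≤ k → v j k = 0 := by
    intro j k hjk
    by_cases hP : P (j, k)
    · have hform := Tsub_entry_form hvT j k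
      have hcoord := congrFun h0 ⟨(j, k), ⟨hjk, hP⟩⟩
      have hc0 : (if (j ∈ I) ↔ (k ∈ I) then (v j k).im else (v j k).re) = 0 := hcoord
      rw [hform, hc0, Complex.ofReal_zero, zero_mul]
    · exact hvS j k hP
  ext j k
  rw [Matrix.zero_apply]
  rcases le_total j k with h | h
  · exact hmain j k h
  · have hsymv : v j k = v k j := by
      have := congrFun (congrFun hvT.1 k) j
      exact this
    rw [hsymv]
    exact hmain k j h

theorem finrank_V (I : Finset (Fin n)) (P : Fin n × Fin n → Prop) [DecidablePred P]
    (hPs : ∀ j k : Fin n, P (j, k) → P (k, j)) :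
    Module.finrank ℝ ↥(Tsub n I ⊓ suppP n P) =
      Fintype.card {p : Fin n × Fin n // p.1 ≤ p.2 ∧ P p} := by
  have hbij : Function.Bijective ((XiL n I P).domRestrict (Tsub n I ⊓ suppP n P)) := by
    constructor
    · rintro ⟨a, ha⟩ ⟨b, hb⟩ hab
      have h1 : XiL n I P a = XiL n I P b := hab
      have h2 : XiL n I P (a - b) = 0 := by rw [map_sub, h1, sub_self]
      have h3 : a - b ∈ Tsub n I ⊓ suppP n P := sub_mem ha hb
      have h4 := Xi_inj I P h3 h2
      exact Subtype.ext (by rw [← sub_eq_zero]; exact h4)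
    · intro f
      exact ⟨⟨mkMat I P f, mkMat_mem I P hPs f⟩, Xi_mkMat I P f⟩
  rw [(LinearEquiv.ofBijective _ hbij).finrank_eq, Module.finrank_fintype_fun_eq_card]

lemma BL_self_symm (l : Fin n → ℝ) (I : Finset (Fin n)) {u : Matrix (Fin n) (Fin n) ℂ}
    (hu : uᵀ = u) :
    BL n l I u u = ∑ j, ∑ k,
      (l j * epsR I j + l k * epsR I k) * Complex.normSq (u j k) := by
  have husym : ∀ j k : Fin n, Complex.normSq (u k j) = Complex.normSq (u j k) := by
    intro j k
    have h : u j k = u k j := congrFun (congrFun hu k) j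
    rw [h]
  rw [BL_apply]
  calc ∑ j, ∑ k, (2 * l j * epsR I j) * ((u j k).re * (u j k).re + (u j k).im * (u j k).im)
      = ∑ j, ∑ k, ((l j * epsR I j) * Complex.normSq (u j k)
          + (l j * epsR I j) * Complex.normSq (u j k)) :=
        Finset.sum_congr rfl fun j _ => Finset.sum_congr rfl fun k _ => by
          rw [Complex.normSq_apply]; ring
    _ = (∑ j, ∑ k, (l j * epsR I j) * Complex.normSq (u j k))
        + ∑ j, ∑ k, (l j * epsR I j) * Complex.normSq (u j k) := by
        rw [← Finset.sum_add_distrib]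
        exact Finset.sum_congr rfl fun j _ => by rw [← Finset.sum_add_distrib]
    _ = (∑ j, ∑ k, (l j * epsR I j) * Complex.normSq (u j k))
        + ∑ j, ∑ k, (l k * epsR I k) * Complex.normSq (u j k) := by
        congr 1
        rw [Finset.sum_comm]
        exact Finset.sum_congr rfl fun j _ => Finset.sum_congr rfl fun k _ => by
          rw [husym j k]
    _ = ∑ j, ∑ k, (l j * epsR I j + l k * epsR I k) * Complex.normSq (u j k) := by
        rw [← Finset.sum_add_distrib]
        refine Finset.sum_congr rfl fun j _ => ?_
        rw [← Finset.sum_add_distrib]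
        exact Finset.sum_congr rfl fun k _ => by ring

/-- negativity predicate on pairs -/
def negP (l : Fin n → ℝ) (I : Finset (Fin n)) : Fin n × Fin n → Prop :=
  fun p => l p.1 * epsR I p.1 + l p.2 * epsR I p.2 < 0

noncomputable instance (l : Fin n → ℝ) (I : Finset (Fin n)) :
    DecidablePred (negP l I) := fun _ => inferInstanceAs (Decidable (_ < _))

lemma negP_symm (l : Fin n → ℝ) (I : Finset (Fin n)) :
    ∀ j k : Fin n, negP l I (j, k) → negP l I (k, j) := by
  intro j k h
  unfold negP at h ⊢
  dsimp only at h ⊢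
  linarith

lemma nnegP_symm (l : Fin n → ℝ) (I : Finset (Fin n)) :
    ∀ j k : Fin n, (¬ negP l I (j, k)) → ¬ negP l I (k, j) := by
  intro j k h hc
  exact h (negP_symm l I k j hc)

lemma BL_neg_def (l : Fin n → ℝ) (hpos : ∀ i, 0 < l i) (I : Finset (Fin n))
    {u : Matrix (Fin n) (Fin n) ℂ} (hu : u ∈ Tsub n I ⊓ suppP n (negP l I)) (hu0 : u ≠ 0) :
    BL n l I u u < 0 := by
  obtain ⟨huT, huS⟩ := hu
  rw [BL_self_symm l I huT.1, ← Finset.sum_product']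
  have hex : ∃ p : Fin n × Fin n, u p.1 p.2 ≠ 0 := by
    by_contra h
    push_neg at h
    apply hu0
    ext j k
    rw [Matrix.zero_apply]
    exact h (j, k)
  obtain ⟨p0, hp0⟩ := hex
  have hterm : ∀ p ∈ (Finset.univ ×ˢ Finset.univ : Finset (Fin n × Fin n)),
      (l p.1 * epsR I p.1 + l p.2 * epsR I p.2) * Complex.normSq (u p.1 p.2) ≤
        (fun _ : Fin n × Fin n => (0:ℝ)) p := by
    intro p _
    by_cases hc : negP l I (p.1, p.2)
    · have hcf : l p.1 * epsR I p.1 + l p.2 * epsR I p.2 < 0 := hc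
      exact mul_nonpos_of_nonpos_of_nonneg hcf.le (Complex.normSq_nonneg _)
    · rw [huS p.1 p.2 hc]
      simp
  have hstrict : ∃ p ∈ (Finset.univ ×ˢ Finset.univ : Finset (Fin n × Fin n)),
      (l p.1 * epsR I p.1 + l p.2 * epsR I p.2) * Complex.normSq (u p.1 p.2) <
        (fun _ : Fin n × Fin n => (0:ℝ)) p := by
    refine ⟨p0, Finset.mem_product.mpr ⟨Finset.mem_univ _, Finset.mem_univ _⟩, ?_⟩
    have hcf : negP l I (p0.1, p0.2) := by
      by_contra hc
      exact hp0 (huS p0.1 p0.2 hc)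
    have : (0:ℝ) < Complex.normSq (u p0.1 p0.2) := by
      have := Complex.normSq_pos.mpr hp0
      exact this
    exact mul_neg_of_neg_of_pos hcf this
  have := Finset.sum_lt_sum hterm hstrict
  simpa using this

lemma BL_nonneg_def (l : Fin n → ℝ) (I : Finset (Fin n))
    {u : Matrix (Fin n) (Fin n) ℂ}
    (hu : u ∈ Tsub n I ⊓ suppP n (fun p => ¬ negP l I p)) : 0 ≤ BL n l I u u := by
  obtain ⟨huT, huS⟩ := hu
  rw [BL_self_symm l I huT.1]
  apply Finset.sum_nonneg
  intro j _
  apply Finset.sum_nonneg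
  intro k _
  by_cases hc : negP l I (j, k)
  · rw [huS j k (not_not.mpr hc)]
    simp
  · have h0 : 0 ≤ l j * epsR I j + l k * epsR I k := not_lt.mp hc
    exact mul_nonneg h0 (Complex.normSq_nonneg _)

lemma negP_iff (l : Fin n → ℝ) (hpos : ∀ i, 0 < l i) (hmono : StrictMono l)
    (I : Finset (Fin n)) {j k : Fin n} (hjk : j ≤ k) : negP l I (j, k) ↔ k ∈ I := by
  unfold negP epsR
  dsimp only
  by_cases hj : j ∈ I <;> by_cases hk : k ∈ I <;>
    simp only [hj, hk, if_true, if_false, iff_true, iff_false]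
  · nlinarith [hpos j, hpos k]
  · have hlt : j < k := lt_of_le_of_ne hjk (fun h => hk (h ▸ hj))
    have := hmono hlt
    intro hcon
    linarith
  · have hlt : j < k := lt_of_le_of_ne hjk (fun h => hj (h ▸ hk))
    have := hmono hlt
    linarith
  · intro hcon
    nlinarith [hpos j, hpos k]

/-- the subtype of admissible pairs with second coordinate in `I`, as a sigma type -/
def sigEquiv (I : Finset (Fin n)) : {p : Fin n × Fin n // p.1 ≤ p.2 ∧ p.2 ∈ I} ≃
    Σ k : {k : Fin n // k ∈ I}, {j : Fin n // j ≤ k.1} where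
  toFun p := ⟨⟨p.1.2, p.2.2⟩, ⟨p.1.1, p.2.1⟩⟩
  invFun x := ⟨(x.2.1, x.1.1), x.2.2, x.1.2⟩
  left_inv p := rfl
  right_inv x := rfl

lemma card_le_fin (kk : Fin n) : Fintype.card {j : Fin n // j ≤ kk} = (kk : ℕ) + 1 := by
  have e : {j : Fin n // j ≤ kk} ≃ Fin ((kk : ℕ) + 1) := {
    toFun := fun j => ⟨j.1.1, Nat.lt_succ_of_le j.2⟩
    invFun := fun i => ⟨⟨i.1, Nat.lt_of_lt_of_le i.isLt (Nat.succ_le_of_lt kk.isLt)⟩,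
      Nat.lt_succ_iff.mp i.isLt⟩
    left_inv := fun j => Subtype.ext (Fin.ext rfl)
    right_inv := fun i => Fin.ext rfl }
  rw [Fintype.card_congr e, Fintype.card_fin]

lemma card_negP (l : Fin n → ℝ) (hpos : ∀ i, 0 < l i) (hmono : StrictMono l)
    (I : Finset (Fin n)) :
    Fintype.card {p : Fin n × Fin n // p.1 ≤ p.2 ∧ negP l I p} = ∑ j ∈ I, ((j : ℕ) + 1) := by
  have e1 : ∀ p : Fin n × Fin n, (p.1 ≤ p.2 ∧ negP l I p) ↔ (p.1 ≤ p.2 ∧ p.2 ∈ I) := by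
    intro p
    constructor
    · rintro ⟨h1, h2⟩
      exact ⟨h1, (negP_iff l hpos hmono I h1).mp h2⟩
    · rintro ⟨h1, h2⟩
      exact ⟨h1, (negP_iff l hpos hmono I h1).mpr h2⟩
  rw [Fintype.card_congr (Equiv.subtypeEquivRight e1), Fintype.card_congr (sigEquiv I),
    Fintype.card_sigma]
  rw [Finset.sum_congr rfl (fun k _ => card_le_fin (n := n) k.1)]
  exact Finset.sum_coe_sort I (fun j => (j : ℕ) + 1)

lemma inf_supp_true (I : Finset (Fin n)) :
    Tsub n I ⊓ suppP n (fun _ => True) = Tsub n I := by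
  apply le_antisymm inf_le_left
  intro v hv
  exact Submodule.mem_inf.mpr ⟨hv, fun j k h => absurd trivial h⟩

lemma card_split (l : Fin n → ℝ) (I : Finset (Fin n)) :
    Fintype.card {p : Fin n × Fin n // p.1 ≤ p.2 ∧ negP l I p}
      + Fintype.card {p : Fin n × Fin n // p.1 ≤ p.2 ∧ ¬ negP l I p}
    = Fintype.card {p : Fin n × Fin n // p.1 ≤ p.2 ∧ True} := by
  have e1 := Equiv.subtypeSubtypeEquivSubtypeInter
    (fun p : Fin n × Fin n => p.1 ≤ p.2) (fun p => negP l I p)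
  have e2 := Equiv.subtypeSubtypeEquivSubtypeInter
    (fun p : Fin n × Fin n => p.1 ≤ p.2) (fun p => ¬ negP l I p)
  have e3 := Equiv.subtypeEquivRight
    (fun p : Fin n × Fin n => (iff_of_eq (and_true (p.1 ≤ p.2))).symm)
  rw [← Fintype.card_congr e1, ← Fintype.card_congr e2, ← Fintype.card_congr e3]
  have h1 := Fintype.card_subtype_compl
    (fun x : {p : Fin n × Fin n // p.1 ≤ p.2} => negP l I x.1)
  have h2 := Fintype.card_subtype_le
    (fun x : {p : Fin n × Fin n // p.1 ≤ p.2} => negP l I x.1)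
  omega

theorem index_at_sigma (l : Fin n → ℝ) (hpos : ∀ i, 0 < l i) (hmono : StrictMono l)
    (I : Finset (Fin n)) :
    HasIndexAt (LagrangianGrassmannianSet n)
      (fun y => ‖y - Matrix.diagonal (fun i => (l i : ℂ))‖ ^ 2)
      (sigmaM n I) (∑ j ∈ I, ((j : ℕ) + 1)) := by
  refine ⟨BL n l I, hessian_at_sigma l I, ?_, ?_⟩
  · refine ⟨Tsub n I ⊓ suppP n (negP l I), ?_, ?_, ?_⟩
    · intro v hv
      rw [tangent_eq_Tsub I]
      exact (Submodule.mem_inf.mp hv).1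
    · rw [finrank_V I (negP l I) (negP_symm l I), card_negP l hpos hmono I]
    · intro u hu hu0
      exact BL_neg_def l hpos I hu hu0
  · intro W hWsub hWneg
    have hWle : W ≤ Tsub n I := by
      intro u hu
      have h := hWsub hu
      rw [tangent_eq_Tsub I] at h
      exact h
    set Vp := Tsub n I ⊓ suppP n (fun p => ¬ negP l I p) with hVp
    have hinf : W ⊓ Vp = ⊥ := by
      rw [eq_bot_iff]
      intro u hu
      rcases eq_or_ne u 0 with rfl | hne
      · simp
      · exfalso
        have h1 := hWneg u hu.1 hne
        have h2 := BL_nonneg_def l I hu.2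
        linarith
    have hsum := Submodule.finrank_sup_add_finrank_inf_eq W Vp
    rw [hinf, finrank_bot] at hsum
    have hle : Module.finrank ℝ ↥(W ⊔ Vp) ≤ Module.finrank ℝ ↥(Tsub n I) :=
      Submodule.finrank_mono (sup_le hWle inf_le_left)
    have hT : Module.finrank ℝ ↥(Tsub n I) =
        Fintype.card {p : Fin n × Fin n // p.1 ≤ p.2 ∧ True} := by
      rw [← inf_supp_true I, finrank_V I (fun _ => True) (fun _ _ h => h)]
    have hVpr : Module.finrank ℝ ↥Vp =
        Fintype.card {p : Fin n × Fin n // p.1 ≤ p.2 ∧ ¬ negP l I p} :=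
      finrank_V I (fun p => ¬ negP l I p) (nnegP_symm l I)
    have hcards := card_split l I
    have hneg := card_negP l hpos hmono I
    omega

end Index

end LG16


/-- For `0 < λ₁ < ⋯ < λ_n` and `a = diag(λ₁,…,λ_n)`, the function
`f_a(x) = ‖x − a‖²` is a Morse function on `LG_n`; its critical points are exactly the
`σ_I = diag(ε₁,…,ε_n)` with `ε_j = −1` for `j ∈ I` and `1` otherwise; and the index of
`σ_{i₁,…,i_r}` is `i₁ + ⋯ + i_r`. -/
theorem lagrangianGrassmannian_distSq_isMorse (n : ℕ) (l : Fin n → ℝ)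
    (hpos : ∀ i, 0 < l i) (hmono : StrictMono l) :
    IsMorseOn (LagrangianGrassmannianSet n)
      (fun y => ‖y - Matrix.diagonal (fun i => (l i : ℂ))‖ ^ 2) ∧
    {x | IsCriticalPointOn (LagrangianGrassmannianSet n)
        (fun y => ‖y - Matrix.diagonal (fun i => (l i : ℂ))‖ ^ 2) x} =
      {x | ∃ I : Finset (Fin n),
        x = Matrix.diagonal (fun j => if j ∈ I then (-1 : ℂ) else 1)} ∧
    ∀ I : Finset (Fin n),
      HasIndexAt (LagrangianGrassmannianSet n)
        (fun y => ‖y - Matrix.diagonal (fun i => (l i : ℂ))‖ ^ 2)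
        (Matrix.diagonal (fun j => if j ∈ I then (-1 : ℂ) else 1))
        (∑ j ∈ I, ((j : ℕ) + 1)) := by
  classical
  refine ⟨?_, ?_, ?_⟩
  · intro x hcrit
    obtain ⟨I, rfl⟩ := LG16.critical_eq_sigma l hpos hmono hcrit
    exact ⟨hcrit, LG16.BL n l I, LG16.hessian_at_sigma l I,
      LG16.nondeg_at_sigma l hpos hmono I⟩
  · ext x
    simp only [Set.mem_setOf_eq]
    constructor
    · intro hcrit
      obtain ⟨I, hI⟩ := LG16.critical_eq_sigma l hpos hmono hcrit
      exact ⟨I, hI⟩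
    · rintro ⟨I, rfl⟩
      exact LG16.sigma_critical l I
  · intro I
    exact LG16.index_at_sigma l hpos hmono I
end
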